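/- arXiv:math/0211393 — 5 statements merged into one kernel-verified Lean document; each statement's English description precedes it below -/
import Mathlib

section
/- Let F be a real-valued function on axis-parallel rectangles in ℝ² which is additive under single cuts: whenever a rectangle R is split by a horizontal or vertical line into two non-overlapping rectangles R₁, R₂ with R = R₁ ∪ R₂, one has F(R) = F(R₁) + F(R₂). Then F is unambiguously defined on figures: for any two finite families (R₁,…,R_m) and (R'₁,…,R'_n) of pairwise non-overlapping axis-parallel rectangles with the same union, Σᵢ F(Rᵢ) = Σⱼ F(R'ⱼ). -/
/-- The axis-parallel rectangle `[a,b] × [c,d]` in `ℝ²`. -/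
def Rect (a b c d : ℝ) : Set (ℝ × ℝ) := Set.Icc a b ×ˢ Set.Icc c d

/-- A set is an axis-parallel rectangle. -/
def IsRect (R : Set (ℝ × ℝ)) : Prop :=
  ∃ a b c d : ℝ, a ≤ b ∧ c ≤ d ∧ R = Rect a b c d

/-!
Refine both families to the grid spanned by all their corner coordinates. Cut-additivity
splits each rectangle into the grid cells it contains. Since the rectangles do not overlap and
have their corners on the grid, every grid cell contained in the union lies in exactly one
rectangle (an interior point of the cell lies in some rectangle, which then contains the whole
cell). Hence both sums equal the sum of `F` over the grid cells contained in the common union.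
-/

theorem sum_Ico_eq_of_additive {α M : Type*} [Preorder α] [AddCancelCommMonoid M]
    (g : α → α → M) (hg : ∀ a b c, a ≤ b → b ≤ c → g a c = g a b + g b c)
    {x : ℕ → α} (hx : Monotone x) {s t : ℕ} (hst : s ≤ t) :
    ∑ k ∈ Finset.Ico s t, g (x k) (x (k + 1)) = g (x s) (x t) := by
  induction t, hst using Nat.le_induction with
  | base =>
    rw [Finset.Ico_self, Finset.sum_empty, eq_comm, ← left_eq_add]
    exact hg _ _ _ le_rfl le_rfl
  | succ t hst ih =>
    rw [Finset.sum_Ico_succ_top hst, ih, hg (x s) (x t) (x (t + 1)) (hx hst) (hx t.le_succ)]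

theorem exists_strictMono_coe_subset_image_Iio_card (Z : Finset ℝ) :
    ∃ z : ℕ → ℝ, StrictMono z ∧ ↑Z ⊆ z '' Set.Iio Z.card := by
  obtain ⟨B, hB⟩ := Z.bddAbove
  let e := Z.orderEmbOfFin rfl
  refine ⟨fun k => if h : k < Z.card then e ⟨k, h⟩ else B + k,
    strictMono_nat_of_lt_succ fun k => ?_, fun w hw => ?_⟩
  · split_ifs with hk hk' hk'
    · exact e.strictMono (Fin.mk_lt_mk.mpr k.lt_succ_self)
    · have : e ⟨k, hk⟩ ≤ B := hB (Z.orderEmbOfFin_mem rfl _)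
      push_cast
      linarith
    · omega
    · push_cast
      linarith
  · obtain ⟨j, rfl⟩ : w ∈ Set.range e := by rwa [Finset.range_orderEmbOfFin]
    exact ⟨j, j.isLt, dif_pos j.isLt⟩

def IsVCutAdditive (F : Set (ℝ × ℝ) → ℝ) : Prop :=
  ∀ a b c d m : ℝ, a ≤ m → m ≤ b → c ≤ d →
    F (Rect a b c d) = F (Rect a m c d) + F (Rect m b c d)

def IsHCutAdditive (F : Set (ℝ × ℝ) → ℝ) : Prop :=
  ∀ a b c d m : ℝ, a ≤ b → c ≤ m → m ≤ d →
    F (Rect a b c d) = F (Rect a b c m) + F (Rect a b m d)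

def IsRectOver (Z : Set ℝ) (R : Set (ℝ × ℝ)) : Prop :=
  ∃ a ∈ Z, ∃ b ∈ Z, ∃ c ∈ Z, ∃ d ∈ Z, a ≤ b ∧ c ≤ d ∧ R = Rect a b c d

theorem IsRectOver.mono {Z Z' : Set ℝ} {R : Set (ℝ × ℝ)} (hZ : Z ⊆ Z')
    (hR : IsRectOver Z R) : IsRectOver Z' R := by
  obtain ⟨a, ha, b, hb, c, hc, d, hd, hab, hcd, rfl⟩ := hR
  exact ⟨a, hZ ha, b, hZ hb, c, hZ hc, d, hZ hd, hab, hcd, rfl⟩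

theorem exists_finset_forall_isRectOver {m : ℕ} {R : ℕ → Set (ℝ × ℝ)}
    (hR : ∀ i < m, IsRect (R i)) : ∃ Z : Finset ℝ, ∀ i < m, IsRectOver Z (R i) := by
  induction m with
  | zero => exact ⟨∅, fun i hi => absurd hi i.not_lt_zero⟩
  | succ m ih =>
    obtain ⟨Z, hZ⟩ := ih fun i hi => hR i (Nat.lt_succ_of_lt hi)
    obtain ⟨a, b, c, d, hab, hcd, hRm⟩ := hR m m.lt_succ_self
    refine ⟨Z ∪ {a, b, c, d}, fun i hi => ?_⟩
    rcases Nat.lt_succ_iff_lt_or_eq.mp hi with hi | rfl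
    · exact (hZ i hi).mono (Finset.coe_subset.mpr Finset.subset_union_left)
    · exact ⟨a, by simp, b, by simp, c, by simp, d, by simp, hab, hcd, hRm⟩

section Grid

variable {z : ℕ → ℝ}

theorem StrictMono.Icc_succ_subset_Icc_iff (hz : StrictMono z) {k s t : ℕ} :
    Set.Icc (z k) (z (k + 1)) ⊆ Set.Icc (z s) (z t) ↔ k ∈ Finset.Ico s t := by
  rw [Set.Icc_subset_Icc_iff (hz.monotone k.le_succ), hz.le_iff_le, hz.le_iff_le, Finset.mem_Ico]
  omega

theorem StrictMono.Icc_succ_subset_Icc_of_mem (hz : StrictMono z) {k s t : ℕ} {w : ℝ}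
    (hwk : w ∈ Set.Ioo (z k) (z (k + 1))) (hwst : w ∈ Set.Icc (z s) (z t)) :
    Set.Icc (z k) (z (k + 1)) ⊆ Set.Icc (z s) (z t) := by
  have hs : s < k + 1 := hz.lt_iff_lt.mp (hwst.1.trans_lt hwk.2)
  have ht : k < t := hz.lt_iff_lt.mp (hwk.1.trans_le hwst.2)
  exact hz.Icc_succ_subset_Icc_iff.mpr (Finset.mem_Ico.mpr ⟨by omega, ht⟩)

def gridCell (z : ℕ → ℝ) (p : ℕ × ℕ) : Set (ℝ × ℝ) :=
  Rect (z p.1) (z (p.1 + 1)) (z p.2) (z (p.2 + 1))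

open Classical in
noncomputable def gridCellsIn (z : ℕ → ℝ) (N : ℕ) (S : Set (ℝ × ℝ)) :
    Finset (ℕ × ℕ) :=
  {p ∈ Finset.range N ×ˢ Finset.range N | gridCell z p ⊆ S}

theorem mem_gridCellsIn {N : ℕ} {S : Set (ℝ × ℝ)} {p : ℕ × ℕ} :
    p ∈ gridCellsIn z N S ↔ p.1 < N ∧ p.2 < N ∧ gridCell z p ⊆ S := by
  simp [gridCellsIn, and_assoc]

theorem interior_gridCell (z : ℕ → ℝ) (p : ℕ × ℕ) :
    interior (gridCell z p) =
      Set.Ioo (z p.1) (z (p.1 + 1)) ×ˢ Set.Ioo (z p.2) (z (p.2 + 1)) := by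
  rw [gridCell, Rect, interior_prod_eq, interior_Icc, interior_Icc]

theorem StrictMono.interior_gridCell_nonempty (hz : StrictMono z) (p : ℕ × ℕ) :
    (interior (gridCell z p)).Nonempty := by
  rw [interior_gridCell]
  exact (Set.nonempty_Ioo.mpr (hz p.1.lt_succ_self)).prod
    (Set.nonempty_Ioo.mpr (hz p.2.lt_succ_self))

theorem gridCell_subset_rect_iff (hz : StrictMono z) {p : ℕ × ℕ} {s t u v : ℕ} :
    gridCell z p ⊆ Rect (z s) (z t) (z u) (z v) ↔
      p ∈ Finset.Ico s t ×ˢ Finset.Ico u v := by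
  rw [gridCell, Rect, Rect, Set.prod_subset_prod_iff'
    ((hz.interior_gridCell_nonempty p).mono interior_subset), hz.Icc_succ_subset_Icc_iff,
    hz.Icc_succ_subset_Icc_iff, Finset.mem_product]

theorem gridCell_subset_of_mem_interior (hz : StrictMono z) {R : Set (ℝ × ℝ)}
    (hR : IsRectOver (Set.range z) R) {p : ℕ × ℕ} {w : ℝ × ℝ}
    (hwp : w ∈ interior (gridCell z p)) (hwR : w ∈ R) : gridCell z p ⊆ R := by
  obtain ⟨_, ⟨s, rfl⟩, _, ⟨t, rfl⟩, _, ⟨u, rfl⟩, _, ⟨v, rfl⟩, -, -, rfl⟩ := hR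
  rw [interior_gridCell] at hwp
  exact Set.prod_mono (hz.Icc_succ_subset_Icc_of_mem hwp.1 hwR.1)
    (hz.Icc_succ_subset_Icc_of_mem hwp.2 hwR.2)

theorem gridCellsIn_rect (hz : StrictMono z) {N s t u v : ℕ} (ht : t ≤ N) (hv : v ≤ N) :
    gridCellsIn z N (Rect (z s) (z t) (z u) (z v)) = Finset.Ico s t ×ˢ Finset.Ico u v := by
  ext p
  simp only [mem_gridCellsIn, gridCell_subset_rect_iff hz, Finset.mem_product, Finset.mem_Ico]
  omega

theorem gridCellsIn_biUnion (hz : StrictMono z) {N m : ℕ} {R : ℕ → Set (ℝ × ℝ)}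
    (hR : ∀ i < m, IsRectOver (Set.range z) (R i)) :
    gridCellsIn z N (⋃ i ∈ Finset.range m, R i) =
      (Finset.range m).biUnion fun i => gridCellsIn z N (R i) := by
  ext p
  simp only [mem_gridCellsIn, Finset.mem_biUnion, Finset.mem_range]
  constructor
  · rintro ⟨hp₁, hp₂, hsub⟩
    obtain ⟨w, hw⟩ := hz.interior_gridCell_nonempty p
    obtain ⟨i, hi, hwi⟩ : ∃ i < m, w ∈ R i := by simpa using hsub (interior_subset hw)
    exact ⟨i, hi, hp₁, hp₂, gridCell_subset_of_mem_interior hz (hR i hi) hw hwi⟩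
  · rintro ⟨i, hi, hp₁, hp₂, hsub⟩
    exact ⟨hp₁, hp₂, hsub.trans (Set.subset_iUnion₂_of_subset i hi le_rfl)⟩

theorem pairwiseDisjoint_gridCellsIn (hz : StrictMono z) {N m : ℕ} {R : ℕ → Set (ℝ × ℝ)}
    (hdisj : ∀ i < m, ∀ j < m, i ≠ j → interior (R i) ∩ interior (R j) = ∅) :
    (↑(Finset.range m) : Set ℕ).PairwiseDisjoint fun i => gridCellsIn z N (R i) := by
  intro i hi j hj hij
  rw [Function.onFun, Finset.disjoint_left]
  intro p hpi hpj
  obtain ⟨w, hw⟩ := hz.interior_gridCell_nonempty p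
  have hwij : w ∈ interior (R i) ∩ interior (R j) :=
    ⟨interior_mono (mem_gridCellsIn.mp hpi).2.2 hw,
      interior_mono (mem_gridCellsIn.mp hpj).2.2 hw⟩
  rw [hdisj i (Finset.mem_range.mp hi) j (Finset.mem_range.mp hj) hij] at hwij
  exact hwij

variable {F : Set (ℝ × ℝ) → ℝ}

theorem apply_rect_eq_sum_gridCell (hV : IsVCutAdditive F) (hH : IsHCutAdditive F)
    (hz : Monotone z) {s t u v : ℕ} (hst : s ≤ t) (huv : u ≤ v) :
    F (Rect (z s) (z t) (z u) (z v)) =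
      ∑ p ∈ Finset.Ico s t ×ˢ Finset.Ico u v, F (gridCell z p) := by
  rw [Finset.sum_product, ← sum_Ico_eq_of_additive (fun a b => F (Rect a b (z u) (z v)))
    (fun a b c hab hbc => hV a c _ _ b hab hbc (hz huv)) hz hst]
  refine Finset.sum_congr rfl fun k _ => ?_
  exact (sum_Ico_eq_of_additive (fun c d => F (Rect (z k) (z (k + 1)) c d))
    (fun a b c hab hbc => hH _ _ a c b (hz k.le_succ) hab hbc) hz huv).symm

theorem apply_eq_sum_gridCellsIn (hV : IsVCutAdditive F) (hH : IsHCutAdditive F)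
    (hz : StrictMono z) {N : ℕ} {R : Set (ℝ × ℝ)} (hR : IsRectOver (z '' Set.Iic N) R) :
    F R = ∑ p ∈ gridCellsIn z N R, F (gridCell z p) := by
  obtain ⟨_, ⟨s, -, rfl⟩, _, ⟨t, ht, rfl⟩, _, ⟨u, -, rfl⟩, _, ⟨v, hv, rfl⟩, hst, huv, rfl⟩ :=
    hR
  rw [gridCellsIn_rect hz ht hv,
    apply_rect_eq_sum_gridCell hV hH hz.monotone (hz.le_iff_le.mp hst) (hz.le_iff_le.mp huv)]

theorem sum_apply_eq_sum_gridCellsIn_biUnion (hV : IsVCutAdditive F) (hH : IsHCutAdditive F)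
    (hz : StrictMono z) {N m : ℕ} {R : ℕ → Set (ℝ × ℝ)}
    (hR : ∀ i < m, IsRectOver (z '' Set.Iic N) (R i))
    (hdisj : ∀ i < m, ∀ j < m, i ≠ j → interior (R i) ∩ interior (R j) = ∅) :
    ∑ i ∈ Finset.range m, F (R i) =
      ∑ p ∈ gridCellsIn z N (⋃ i ∈ Finset.range m, R i), F (gridCell z p) := by
  rw [gridCellsIn_biUnion hz fun i hi => (hR i hi).mono (Set.image_subset_range _ _),
    Finset.sum_biUnion (pairwiseDisjoint_gridCellsIn hz hdisj)]
  exact Finset.sum_congr rfl fun i hi =>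
    apply_eq_sum_gridCellsIn hV hH hz (hR i (Finset.mem_range.mp hi))

end Grid

/-- If `F` is a real-valued function on axis-parallel rectangles which is additive under
single vertical and horizontal cuts, then `F` is unambiguously defined on figures: any two
finite families of pairwise non-overlapping axis-parallel rectangles with the same union
have the same total `F`-value. -/
theorem unambiguous_on_figures (F : Set (ℝ × ℝ) → ℝ)
    (hcutV : ∀ a b c d m : ℝ, a ≤ m → m ≤ b → c ≤ d →
      F (Rect a b c d) = F (Rect a m c d) + F (Rect m b c d))
    (hcutH : ∀ a b c d m : ℝ, a ≤ b → c ≤ m → m ≤ d →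
      F (Rect a b c d) = F (Rect a b c m) + F (Rect a b m d))
    (m n : ℕ) (R R' : ℕ → Set (ℝ × ℝ))
    (hR : ∀ i < m, IsRect (R i))
    (hR' : ∀ j < n, IsRect (R' j))
    (hdisj : ∀ i < m, ∀ j < m, i ≠ j → interior (R i) ∩ interior (R j) = ∅)
    (hdisj' : ∀ i < n, ∀ j < n, i ≠ j → interior (R' i) ∩ interior (R' j) = ∅)
    (hunion : ⋃ i ∈ Finset.range m, R i = ⋃ j ∈ Finset.range n, R' j) :
    ∑ i ∈ Finset.range m, F (R i) = ∑ j ∈ Finset.range n, F (R' j) := by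
  obtain ⟨Z, hZ⟩ := exists_finset_forall_isRectOver hR
  obtain ⟨Z', hZ'⟩ := exists_finset_forall_isRectOver hR'
  obtain ⟨z, hz, hzZ⟩ := exists_strictMono_coe_subset_image_Iio_card (Z ∪ Z')
  have hgrid : ↑(Z ∪ Z') ⊆ z '' Set.Iic (Z ∪ Z').card :=
    hzZ.trans (Set.image_mono Set.Iio_subset_Iic_self)
  rw [sum_apply_eq_sum_gridCellsIn_biUnion hcutV hcutH hz
      (fun i hi => (hZ i hi).mono ((Finset.coe_subset.mpr Finset.subset_union_left).trans hgrid))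
      hdisj,
    sum_apply_eq_sum_gridCellsIn_biUnion hcutV hcutH hz
      (fun j hj => (hZ' j hj).mono ((Finset.coe_subset.mpr Finset.subset_union_right).trans hgrid))
      hdisj',
    hunion]
end

section
/- Let F be a real-valued function on figures in ℝ² that is finitely additive (F of a union of finitely many figures with pairwise disjoint interiors equals the sum of the F-values) and absolutely continuous: for every ε > 0 there exists δ > 0 such that every figure of two-dimensional Lebesgue measure less than δ has |F| < ε. Then for every bounded Jordan measurable set S ⊆ ℝ² the integral of F over S exists, i.e. there exists I ∈ ℝ such that F integrates to I over S. -/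
open MeasureTheory

/-- A figure: a union of a finite family of pairwise non-overlapping axis-parallel
rectangles. -/
def IsFigure (C : Set (ℝ × ℝ)) : Prop :=
  ∃ (n : ℕ) (R : ℕ → Set (ℝ × ℝ)),
    (∀ i < n, IsRect (R i)) ∧
    (∀ i < n, ∀ j < n, i ≠ j → interior (R i) ∩ interior (R j) = ∅) ∧
    C = ⋃ i ∈ Finset.range n, R i

/-- `F` integrates to `I` over `S`: for every `ε > 0` there are figures `A ⊆ interior S`
and `B ⊇ closure S` such that `|F C − I| < ε` for every figure `C` with `A ⊆ C ⊆ B`. -/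
def IntegratesTo (F : Set (ℝ × ℝ) → ℝ) (S : Set (ℝ × ℝ)) (I : ℝ) : Prop :=
  ∀ ε > 0, ∃ A B : Set (ℝ × ℝ), IsFigure A ∧ IsFigure B ∧
    A ⊆ interior S ∧ closure S ⊆ B ∧
    ∀ C : Set (ℝ × ℝ), IsFigure C → A ⊆ C → C ⊆ B → |F C - I| < ε

open Metric

lemma vol_prod (s t : Set ℝ) : volume (s ×ˢ t) = volume s * volume t := by
  rw [Measure.volume_eq_prod ℝ ℝ]; exact Measure.prod_prod s t

lemma frontier_rect_null (a b c d : ℝ) (hab : a ≤ b) (hcd : c ≤ d) :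
    volume (frontier (Set.Icc a b ×ˢ Set.Icc c d)) = 0 := by
  rw [frontier_prod_eq]
  refine le_antisymm (le_trans (measure_union_le _ _) ?_) (zero_le)
  rw [vol_prod, vol_prod, closure_Icc, closure_Icc, frontier_Icc hab, frontier_Icc hcd,
    Real.volume_Icc]
  have h1 : volume ({c, d} : Set ℝ) = 0 := (Set.to_countable _).measure_zero volume
  have h2 : volume ({a, b} : Set ℝ) = 0 := (Set.to_countable _).measure_zero volume
  rw [h1, h2, mul_zero, zero_mul, add_zero]

lemma IsRect.isClosed {R : Set (ℝ×ℝ)} (h : IsRect R) : IsClosed R := by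
  obtain ⟨a, b, c, d, -, -, rfl⟩ := h
  exact (isClosed_Icc).prod isClosed_Icc

lemma IsRect.frontier_null {R : Set (ℝ×ℝ)} (h : IsRect R) : volume (R \ interior R) = 0 := by
  obtain ⟨a, b, c, d, hab, hcd, rfl⟩ := h
  refine le_antisymm (le_trans (measure_mono ?_) (frontier_rect_null a b c d hab hcd).le)
    (zero_le)
  intro x hx
  rw [← closure_diff_interior]
  exact ⟨subset_closure hx.1, hx.2⟩

lemma isFigure_biUnion {ι : Type*} [DecidableEq ι] (s : Finset ι) (R : ι → Set (ℝ × ℝ))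
    (h1 : ∀ i ∈ s, IsRect (R i))
    (h2 : ∀ i ∈ s, ∀ j ∈ s, i ≠ j → interior (R i) ∩ interior (R j) = ∅) :
    IsFigure (⋃ i ∈ s, R i) := by
  classical
  refine ⟨s.card, fun k => if h : k < s.card then R (s.equivFin.symm ⟨k, h⟩) else ∅, ?_, ?_, ?_⟩
  · intro k hk
    simp only [dif_pos hk]
    exact h1 _ (s.equivFin.symm ⟨k, hk⟩).2
  · intro k hk l hl hkl
    simp only [dif_pos hk, dif_pos hl]
    refine h2 _ (s.equivFin.symm ⟨k, hk⟩).2 _ (s.equivFin.symm ⟨l, hl⟩).2 ?_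
    intro h
    apply hkl
    have := s.equivFin.symm.injective (Subtype.ext h)
    simpa using congrArg Fin.val this
  · ext x
    simp only [Set.mem_iUnion, Finset.mem_range, exists_prop]
    constructor
    · rintro ⟨i, hi, hx⟩
      refine ⟨(s.equivFin ⟨i, hi⟩ : Fin s.card), (s.equivFin ⟨i, hi⟩).2, ?_⟩
      simp only [dif_pos (s.equivFin ⟨i, hi⟩).2]
      simpa [Fin.eta] using hx
    · rintro ⟨k, hk, hx⟩
      simp only [dif_pos hk] at hx
      exact ⟨_, (s.equivFin.symm ⟨k, hk⟩).2, hx⟩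

lemma IsFigure.isClosed {A : Set (ℝ×ℝ)} (h : IsFigure A) : IsClosed A := by
  obtain ⟨n, R, hR, -, rfl⟩ := h
  exact Set.Finite.isClosed_biUnion (Finset.finite_toSet _)
    (fun i hi => (hR i (Finset.mem_range.mp hi)).isClosed)

lemma IsFigure.null_diff_interior {A : Set (ℝ×ℝ)} (h : IsFigure A) :
    volume (A \ interior A) = 0 := by
  obtain ⟨n, R, hR, -, rfl⟩ := h
  set A := ⋃ i ∈ Finset.range n, R i with hA
  have hsub : A \ interior A ⊆ ⋃ i ∈ Finset.range n, (R i \ interior (R i)) := by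
    intro x hx
    obtain ⟨hxA, hxI⟩ := hx
    rw [hA, Set.mem_iUnion₂] at hxA
    obtain ⟨i, hi, hxi⟩ := hxA
    refine Set.mem_iUnion₂.mpr ⟨i, hi, hxi, fun hint => hxI ?_⟩
    exact interior_mono (Set.subset_biUnion_of_mem hi) hint
  refine le_antisymm (le_trans (measure_mono hsub) ?_) (zero_le)
  refine le_trans (measure_biUnion_finset_le _ _) ?_
  refine le_of_eq (Finset.sum_eq_zero ?_)
  exact fun i hi => (hR i (Finset.mem_range.mp hi)).frontier_null

lemma isFigure_union_null {A B : Set (ℝ×ℝ)} (hA : IsFigure A) (hB : IsFigure B)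
    (hvol : volume B = 0) : IsFigure (A ∪ B) := by
  obtain ⟨n, R, hR, hRd, rfl⟩ := hA
  obtain ⟨m, T, hT, hTd, rfl⟩ := hB
  have hTe : ∀ j < m, interior (T j) = ∅ := by
    intro j hj
    by_contra hne
    have hpos : 0 < volume (interior (T j)) :=
      isOpen_interior.measure_pos volume (Set.nonempty_iff_ne_empty.mpr hne)
    have : volume (interior (T j)) = 0 := by
      refine le_antisymm (le_trans (measure_mono ?_) hvol.le) (zero_le)
      exact interior_subset.trans (Set.subset_biUnion_of_mem (Finset.mem_range.mpr hj))
    exact absurd this hpos.ne'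
  refine ⟨n + m, fun k => if k < n then R k else T (k - n), ?_, ?_, ?_⟩
  · intro k hk
    by_cases h : k < n
    · simp only [if_pos h]; exact hR k h
    · simp only [if_neg h]; exact hT (k - n) (by omega)
  · intro k hk l hl hkl
    by_cases h : k < n <;> by_cases h' : l < n <;>
      simp only [if_pos, if_neg, h, h', if_true, if_false]
    · exact hRd k h l h' hkl
    · rw [hTe (l - n) (by omega)]; exact Set.inter_empty _
    · rw [hTe (k - n) (by omega)]; exact Set.empty_inter _
    · rw [hTe (l - n) (by omega)]; exact Set.inter_empty _
  · ext x
    simp only [Set.mem_union, Set.mem_iUnion, Finset.mem_range, exists_prop]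
    constructor
    · rintro (⟨i, hi, hx⟩ | ⟨j, hj, hx⟩)
      · exact ⟨i, by omega, by simp only [if_pos hi]; exact hx⟩
      · exact ⟨n + j, by omega, by
          simp only [if_neg (show ¬ n + j < n by omega), Nat.add_sub_cancel_left]; exact hx⟩
    · rintro ⟨k, hk, hx⟩
      by_cases h : k < n
      · simp only [if_pos h] at hx; exact Or.inl ⟨k, h, hx⟩
      · simp only [if_neg h] at hx; exact Or.inr ⟨k - n, by omega, hx⟩

lemma seg_null_v (x c d : ℝ) : volume (Set.Icc x x ×ˢ Set.Icc c d) = 0 := by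
  rw [vol_prod, Real.volume_Icc, sub_self, ENNReal.ofReal_zero, zero_mul]

lemma seg_null_h (a b y : ℝ) : volume (Set.Icc a b ×ˢ Set.Icc y y) = 0 := by
  rw [vol_prod, show volume (Set.Icc y y) = _ from Real.volume_Icc, sub_self,
    ENNReal.ofReal_zero, mul_zero]

noncomputable def sv (s : Finset ℝ) (k : ℕ) : ℝ := (s.sort (· ≤ ·)).getD k 0

lemma sv_strict (s : Finset ℝ) {k l : ℕ} (hl : l < s.card) (hkl : k < l) : sv s k < sv s l := by
  have hlen : (s.sort (· ≤ ·)).length = s.card := s.length_sort _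
  have hp : List.Pairwise (· < ·) (s.sort (· ≤ ·)) := by
    have h1 := s.pairwise_sort (· ≤ ·)
    have h2 := s.sort_nodup (· ≤ ·)
    exact List.Pairwise.imp₂ (fun a b hab hne => lt_of_le_of_ne hab hne) h1 h2
  have := List.pairwise_iff_get.mp hp ⟨k, by omega⟩ ⟨l, by omega⟩ hkl
  rw [sv, sv, List.getD_eq_getElem (hn := (by omega : k < (s.sort (· ≤ ·)).length)),
    List.getD_eq_getElem (hn := (by omega : l < (s.sort (· ≤ ·)).length))]
  simpa using this

lemma sv_mono (s : Finset ℝ) {k l : ℕ} (hl : l < s.card) (hkl : k ≤ l) : sv s k ≤ sv s l := by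
  rcases eq_or_lt_of_le hkl with rfl | h
  · exact le_rfl
  · exact (sv_strict s hl h).le

lemma sv_mem (s : Finset ℝ) {k : ℕ} (hk : k < s.card) : sv s k ∈ s := by
  have hlen : (s.sort (· ≤ ·)).length = s.card := s.length_sort _
  rw [sv, List.getD_eq_getElem (hn := (by omega : k < (s.sort (· ≤ ·)).length))]
  exact (Finset.mem_sort _).mp (List.getElem_mem _)

lemma mem_sv (s : Finset ℝ) {t : ℝ} (ht : t ∈ s) : ∃ k, k < s.card ∧ sv s k = t := by
  have hlen : (s.sort (· ≤ ·)).length = s.card := s.length_sort _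
  have : t ∈ s.sort (· ≤ ·) := (Finset.mem_sort _).mpr ht
  obtain ⟨⟨k, hk⟩, hget⟩ := List.mem_iff_get.mp this
  exact ⟨k, by omega, by rw [sv, List.getD_eq_getElem (hn := hk)]; simpa using hget⟩

lemma sv_lt_index (s : Finset ℝ) {k l : ℕ} (hk : k < s.card) (hl : l < s.card)
    (h : sv s k < sv s l) : k < l := by
  by_contra hc
  exact absurd (sv_mono s hk (by omega)) (not_le.mpr h)

lemma sv_consecutive (s : Finset ℝ) {k : ℕ} {t : ℝ} (hk : k + 1 < s.card) (ht : t ∈ s) :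
    ¬ (sv s k < t ∧ t < sv s (k+1)) := by
  rintro ⟨h1, h2⟩
  obtain ⟨r, hr, rfl⟩ := mem_sv s ht
  have := sv_lt_index s (by omega) hr h1
  have := sv_lt_index s hr hk h2
  omega

lemma sv_between (s : Finset ℝ) {u a b : ℝ} (ha : a ∈ s) (hb : b ∈ s) (hau : a < u)
    (hub : u < b) (hu : u ∉ s) : ∃ k, k + 1 < s.card ∧ sv s k < u ∧ u < sv s (k+1) := by
  classical
  obtain ⟨ra, hra, hsa⟩ := mem_sv s ha
  obtain ⟨rb, hrb, hsb⟩ := mem_sv s hb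
  set P := (Finset.range s.card).filter (fun r => sv s r < u) with hP
  have hPne : P.Nonempty := ⟨ra, by simp [hP, Finset.mem_filter, hra, hsa ▸ hau]⟩
  set k := P.max' hPne with hk
  have hkP : k ∈ P := P.max'_mem hPne
  have hkcard : k < s.card := Finset.mem_range.mp (Finset.mem_filter.mp hkP).1
  have hku : sv s k < u := (Finset.mem_filter.mp hkP).2
  have hkrb : k < rb := sv_lt_index s hkcard hrb (lt_trans hku (hsb ▸ hub))
  have hk1 : k + 1 < s.card := by omega
  refine ⟨k, hk1, hku, ?_⟩
  rcases lt_trichotomy (sv s (k+1)) u with h | h | h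
  · have : k + 1 ∈ P := Finset.mem_filter.mpr ⟨Finset.mem_range.mpr hk1, h⟩
    have := P.le_max' _ this
    omega
  · exact absurd (h ▸ sv_mem s hk1) hu
  · exact h

lemma interior_disjoint_of_null {A E : Set (ℝ×ℝ)} (h : volume (E ∩ interior A) = 0) :
    interior A ∩ interior E = ∅ := by
  by_contra hne
  have hopen : IsOpen (interior A ∩ interior E) := isOpen_interior.inter isOpen_interior
  have hpos : 0 < volume (interior A ∩ interior E) :=
    hopen.measure_pos volume (Set.nonempty_iff_ne_empty.mpr hne)
  have : volume (interior A ∩ interior E) = 0 := by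
    refine le_antisymm (le_trans (measure_mono ?_) h.le) (zero_le)
    exact fun x hx => ⟨interior_subset hx.2, hx.1⟩
  exact absurd this hpos.ne'

lemma figure_split {A C : Set (ℝ×ℝ)} (hA : IsFigure A) (hC : IsFigure C) :
    ∃ E : Set (ℝ×ℝ), IsFigure E ∧ E ⊆ C ∧ A ∪ E = A ∪ C ∧
      volume (E ∩ interior A) = 0 := by
  classical
  obtain ⟨n, R, hR, hRd, hAe⟩ := id hA
  obtain ⟨m, T, hT, hTd, hCe⟩ := id hC
  set N := n + m with hN
  set G : ℕ → Set (ℝ×ℝ) := fun k => if k < n then R k else T (k - n) with hGdef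
  have hGrect : ∀ k < N, IsRect (G k) := by
    intro k hk
    by_cases h : k < n
    · simp only [hGdef, if_pos h]; exact hR k h
    · simp only [hGdef, if_neg h]; exact hT (k - n) (by omega)
  have hex : ∀ k, ∃ a b c d : ℝ, a ≤ b ∧ c ≤ d ∧ (k < N → G k = Rect a b c d) := by
    intro k
    by_cases hk : k < N
    · obtain ⟨a, b, c, d, h1, h2, h3⟩ := hGrect k hk
      exact ⟨a, b, c, d, h1, h2, fun _ => h3⟩
    · exact ⟨0, 1, 0, 1, by norm_num, by norm_num, fun h => absurd h hk⟩
  choose a b c d hab hcd hGr using hex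
  have hmemA : ∀ x, x ∈ A ↔ ∃ i, i < n ∧ x ∈ G i := by
    intro x
    rw [hAe]
    simp only [Set.mem_iUnion, Finset.mem_range, exists_prop]
    constructor
    · rintro ⟨i, hi, hx⟩; exact ⟨i, hi, by simp only [hGdef, if_pos hi]; exact hx⟩
    · rintro ⟨i, hi, hx⟩; simp only [hGdef, if_pos hi] at hx; exact ⟨i, hi, hx⟩
  have hmemC : ∀ x, x ∈ C ↔ ∃ j, j < m ∧ x ∈ G (n + j) := by
    intro x
    rw [hCe]
    simp only [Set.mem_iUnion, Finset.mem_range, exists_prop]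
    constructor
    · rintro ⟨j, hj, hx⟩
      exact ⟨j, hj, by
        simp only [hGdef, if_neg (show ¬ n + j < n by omega), Nat.add_sub_cancel_left]
        exact hx⟩
    · rintro ⟨j, hj, hx⟩
      simp only [hGdef, if_neg (show ¬ n + j < n by omega), Nat.add_sub_cancel_left] at hx
      exact ⟨j, hj, hx⟩
  set X : Finset ℝ := (Finset.range N).image a ∪ (Finset.range N).image b with hX
  set Y : Finset ℝ := (Finset.range N).image c ∪ (Finset.range N).image d with hY
  have haX : ∀ k < N, a k ∈ X := fun k hk => Finset.mem_union_left _
    (Finset.mem_image.mpr ⟨k, Finset.mem_range.mpr hk, rfl⟩)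
  have hbX : ∀ k < N, b k ∈ X := fun k hk => Finset.mem_union_right _
    (Finset.mem_image.mpr ⟨k, Finset.mem_range.mpr hk, rfl⟩)
  have hcY : ∀ k < N, c k ∈ Y := fun k hk => Finset.mem_union_left _
    (Finset.mem_image.mpr ⟨k, Finset.mem_range.mpr hk, rfl⟩)
  have hdY : ∀ k < N, d k ∈ Y := fun k hk => Finset.mem_union_right _
    (Finset.mem_image.mpr ⟨k, Finset.mem_range.mpr hk, rfl⟩)
  set L1 := X.card with hL1
  set L2 := Y.card with hL2
  set cell : ℕ → ℕ → Set (ℝ×ℝ) :=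
    fun k l => Rect (sv X k) (sv X (k+1)) (sv Y l) (sv Y (l+1)) with hcell
  have hcell_int : ∀ k l, interior (cell k l) =
      Set.Ioo (sv X k) (sv X (k+1)) ×ˢ Set.Ioo (sv Y l) (sv Y (l+1)) := by
    intro k l
    simp only [hcell, Rect, interior_prod_eq, interior_Icc]
  -- C1 : interiors of cells are inside or disjoint from each family rectangle
  have hC1 : ∀ k l j, k+1 < L1 → l+1 < L2 → j < N →
      (interior (cell k l) ∩ G j).Nonempty → interior (cell k l) ⊆ G j := by
    intro k l j hk hl hj ⟨z, hz1, hz2⟩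
    rw [hGr j hj] at hz2 ⊢
    rw [hcell_int] at hz1 ⊢
    obtain ⟨⟨hz11, hz12⟩, hz13, hz14⟩ := hz1
    obtain ⟨⟨hz21, hz22⟩, hz23, hz24⟩ := hz2
    have hak : a j ≤ sv X k := by
      rcases le_or_gt (a j) (sv X k) with h | h
      · exact h
      · exact absurd ⟨h, lt_of_le_of_lt hz21 hz12⟩ (sv_consecutive X hk (haX j hj))
    have hbk : sv X (k+1) ≤ b j := by
      rcases le_or_gt (sv X (k+1)) (b j) with h | h
      · exact h
      · exact absurd ⟨lt_of_lt_of_le hz11 hz22, h⟩ (sv_consecutive X hk (hbX j hj))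
    have hcl : c j ≤ sv Y l := by
      rcases le_or_gt (c j) (sv Y l) with h | h
      · exact h
      · exact absurd ⟨h, lt_of_le_of_lt hz23 hz14⟩ (sv_consecutive Y hl (hcY j hj))
    have hdl : sv Y (l+1) ≤ d j := by
      rcases le_or_gt (sv Y (l+1)) (d j) with h | h
      · exact h
      · exact absurd ⟨lt_of_lt_of_le hz13 hz24, h⟩ (sv_consecutive Y hl (hdY j hj))
    rintro y ⟨⟨hy1, hy2⟩, hy3, hy4⟩
    exact ⟨⟨le_trans hak hy1.le, le_trans hy2.le hbk⟩,
      ⟨le_trans hcl hy3.le, le_trans hy4.le hdl⟩⟩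
  set sCell := ((Finset.range (L1-1)) ×ˢ (Finset.range (L2-1))).filter
    (fun p => interior (cell p.1 p.2) ⊆ C \ A) with hsCell
  set Ecells := ⋃ p ∈ sCell, cell p.1 p.2 with hEcells
  set sV := ((Finset.range L1) ×ˢ (Finset.range m)).filter
    (fun p => a (n+p.2) ≤ sv X p.1 ∧ sv X p.1 ≤ b (n+p.2)) with hsV
  set Vseg : ℕ×ℕ → Set (ℝ×ℝ) :=
    fun p => Rect (sv X p.1) (sv X p.1) (c (n+p.2)) (d (n+p.2)) with hVseg
  set Ev := ⋃ p ∈ sV, Vseg p with hEv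
  set sH := ((Finset.range L2) ×ˢ (Finset.range m)).filter
    (fun p => c (n+p.2) ≤ sv Y p.1 ∧ sv Y p.1 ≤ d (n+p.2)) with hsH
  set Hseg : ℕ×ℕ → Set (ℝ×ℝ) :=
    fun p => Rect (a (n+p.2)) (b (n+p.2)) (sv Y p.1) (sv Y p.1) with hHseg
  set Eh := ⋃ p ∈ sH, Hseg p with hEh
  set E := Ecells ∪ (Ev ∪ Eh) with hE
  -- bounds for members of sCell
  have hsCell_mem : ∀ p ∈ sCell, p.1 + 1 < L1 ∧ p.2 + 1 < L2 ∧
      interior (cell p.1 p.2) ⊆ C \ A := by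
    intro p hp
    rw [hsCell, Finset.mem_filter, Finset.mem_product, Finset.mem_range, Finset.mem_range] at hp
    exact ⟨by omega, by omega, hp.2⟩
  have hcell_rect : ∀ p ∈ sCell, IsRect (cell p.1 p.2) := by
    intro p hp
    obtain ⟨h1, h2, -⟩ := hsCell_mem p hp
    exact ⟨_, _, _, _, (sv_strict X h1 (by omega)).le, (sv_strict Y h2 (by omega)).le, rfl⟩
  -- figure: Ecells
  have hEcells_fig : IsFigure Ecells := by
    refine isFigure_biUnion sCell _ hcell_rect ?_
    rintro ⟨k, l⟩ hp ⟨k', l'⟩ hq hne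
    obtain ⟨hk1, hl1, -⟩ := hsCell_mem _ hp
    obtain ⟨hk1', hl1', -⟩ := hsCell_mem _ hq
    ext z
    simp only [hcell_int, Set.mem_inter_iff, Set.mem_prod, Set.mem_Ioo,
      Set.mem_empty_iff_false, iff_false]
    rintro ⟨⟨⟨u1, u2⟩, u3, u4⟩, ⟨⟨v1, v2⟩, v3, v4⟩⟩
    rcases Nat.lt_trichotomy k k' with h | rfl | h
    · have := sv_mono X (show k' < L1 by omega) (show k+1 ≤ k' from h)
      linarith
    · rcases Nat.lt_trichotomy l l' with h | rfl | h
      · have := sv_mono Y (show l' < L2 by omega) (show l+1 ≤ l' from h)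
        linarith
      · exact hne rfl
      · have := sv_mono Y (show l < L2 by omega) (show l'+1 ≤ l from h)
        linarith
    · have := sv_mono X (show k < L1 by omega) (show k'+1 ≤ k from h)
      linarith
  have hVseg_int : ∀ p, interior (Vseg p) = ∅ := by
    intro p
    simp only [hVseg, Rect, interior_prod_eq, interior_Icc]
    rw [Set.Ioo_self, Set.empty_prod]
  have hHseg_int : ∀ p, interior (Hseg p) = ∅ := by
    intro p
    simp only [hHseg, Rect, interior_prod_eq, interior_Icc]
    rw [Set.Ioo_self, Set.prod_empty]
  have hEv_fig : IsFigure Ev :=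
    isFigure_biUnion sV _ (fun p _ => ⟨_, _, _, _, le_rfl, hcd (n+p.2), rfl⟩)
      (fun p _ q _ _ => by rw [hVseg_int p]; exact Set.empty_inter _)
  have hEh_fig : IsFigure Eh :=
    isFigure_biUnion sH _ (fun p _ => ⟨_, _, _, _, hab (n+p.2), le_rfl, rfl⟩)
      (fun p _ q _ _ => by rw [hHseg_int p]; exact Set.empty_inter _)
  have hEv_null : volume Ev = 0 := by
    refine le_antisymm (le_trans (measure_biUnion_finset_le _ _) ?_) (zero_le)
    refine le_of_eq (Finset.sum_eq_zero fun p _ => ?_)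
    exact seg_null_v _ _ _
  have hEh_null : volume Eh = 0 := by
    refine le_antisymm (le_trans (measure_biUnion_finset_le _ _) ?_) (zero_le)
    refine le_of_eq (Finset.sum_eq_zero fun p _ => ?_)
    exact seg_null_h _ _ _
  have hEvh_null : volume (Ev ∪ Eh) = 0 := by
    refine le_antisymm (le_trans (measure_union_le _ _) ?_) (zero_le)
    rw [hEv_null, hEh_null, add_zero]
  have hE_fig : IsFigure E :=
    isFigure_union_null hEcells_fig (isFigure_union_null hEv_fig hEh_fig hEh_null) hEvh_null
  have hCclosed : IsClosed C := hC.isClosed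
  -- E ⊆ C
  have hEcells_sub : Ecells ⊆ C := by
    refine Set.iUnion₂_subset fun p hp => ?_
    obtain ⟨h1, h2, h3⟩ := hsCell_mem p hp
    have hx1 : sv X p.1 < sv X (p.1+1) := sv_strict X h1 (by omega)
    have hy1 : sv Y p.2 < sv Y (p.2+1) := sv_strict Y h2 (by omega)
    have hcl : cell p.1 p.2 = closure (interior (cell p.1 p.2)) := by
      rw [hcell_int, closure_prod_eq, closure_Ioo hx1.ne, closure_Ioo hy1.ne]
      rfl
    rw [hcl]
    calc closure (interior (cell p.1 p.2)) ⊆ closure (C \ A) := closure_mono h3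
      _ ⊆ closure C := closure_mono Set.diff_subset
      _ = C := hCclosed.closure_eq
  have hEv_sub : Ev ⊆ C := by
    refine Set.iUnion₂_subset fun p hp => ?_
    rw [hsV, Finset.mem_filter, Finset.mem_product, Finset.mem_range, Finset.mem_range] at hp
    obtain ⟨⟨-, hj⟩, h1, h2⟩ := hp
    intro x hx
    obtain ⟨⟨hx1, hx2⟩, hx3, hx4⟩ := hx
    refine (hmemC x).mpr ⟨p.2, hj, ?_⟩
    rw [hGr (n + p.2) (by omega)]
    exact ⟨⟨le_trans h1 hx1, le_trans hx2 h2⟩, hx3, hx4⟩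
  have hEh_sub : Eh ⊆ C := by
    refine Set.iUnion₂_subset fun p hp => ?_
    rw [hsH, Finset.mem_filter, Finset.mem_product, Finset.mem_range, Finset.mem_range] at hp
    obtain ⟨⟨-, hj⟩, h1, h2⟩ := hp
    intro x hx
    obtain ⟨⟨hx1, hx2⟩, hx3, hx4⟩ := hx
    refine (hmemC x).mpr ⟨p.2, hj, ?_⟩
    rw [hGr (n + p.2) (by omega)]
    exact ⟨⟨hx1, hx2⟩, le_trans h1 hx3, le_trans hx4 h2⟩
  have hE_sub : E ⊆ C := by
    rw [hE]
    exact Set.union_subset hEcells_sub (Set.union_subset hEv_sub hEh_sub)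
  -- coverage : C ⊆ A ∪ E
  have hcover : C ⊆ A ∪ E := by
    intro x hx
    by_cases hxA : x ∈ A
    · exact Or.inl hxA
    right
    obtain ⟨j, hj, hxj⟩ := (hmemC x).mp hx
    have hjN : n + j < N := by omega
    have hxr := hxj
    rw [hGr (n + j) hjN] at hxr
    obtain ⟨⟨hxa, hxb⟩, hxc, hxd⟩ := hxr
    by_cases hx1 : x.1 ∈ X
    · -- vertical segment
      obtain ⟨k, hk, hks⟩ := mem_sv X hx1
      rw [hE]
      refine Or.inr (Or.inl ?_)
      refine Set.mem_biUnion (show ((k, j) : ℕ×ℕ) ∈ sV from ?_) ?_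
      · rw [hsV, Finset.mem_filter, Finset.mem_product]
        exact ⟨⟨Finset.mem_range.mpr hk, Finset.mem_range.mpr hj⟩,
          by rw [hks]; exact hxa, by rw [hks]; exact hxb⟩
      · exact ⟨⟨by rw [hks], by rw [hks]⟩, hxc, hxd⟩
    by_cases hx2 : x.2 ∈ Y
    · -- horizontal segment
      obtain ⟨l, hl, hls⟩ := mem_sv Y hx2
      rw [hE]
      refine Or.inr (Or.inr ?_)
      refine Set.mem_biUnion (show ((l, j) : ℕ×ℕ) ∈ sH from ?_) ?_
      · rw [hsH, Finset.mem_filter, Finset.mem_product]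
        exact ⟨⟨Finset.mem_range.mpr hl, Finset.mem_range.mpr hj⟩,
          by rw [hls]; exact hxc, by rw [hls]; exact hxd⟩
      · exact ⟨⟨hxa, hxb⟩, by rw [hls], by rw [hls]⟩
    -- cell case
    have hxa' : a (n+j) < x.1 := lt_of_le_of_ne hxa (fun h => hx1 (h ▸ haX _ hjN))
    have hxb' : x.1 < b (n+j) := lt_of_le_of_ne hxb (fun h => hx1 (h.symm ▸ hbX _ hjN))
    have hxc' : c (n+j) < x.2 := lt_of_le_of_ne hxc (fun h => hx2 (h ▸ hcY _ hjN))
    have hxd' : x.2 < d (n+j) := lt_of_le_of_ne hxd (fun h => hx2 (h.symm ▸ hdY _ hjN))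
    obtain ⟨k, hk1, hk2, hk3⟩ := sv_between X (haX _ hjN) (hbX _ hjN) hxa' hxb' hx1
    obtain ⟨l, hl1, hl2, hl3⟩ := sv_between Y (hcY _ hjN) (hdY _ hjN) hxc' hxd' hx2
    have hxint : x ∈ interior (cell k l) := by
      rw [hcell_int]
      exact ⟨⟨hk2, hk3⟩, hl2, hl3⟩
    have hsubG : interior (cell k l) ⊆ G (n + j) :=
      hC1 k l (n+j) hk1 hl1 hjN ⟨x, hxint, hxj⟩
    have hmem : ((k, l) : ℕ×ℕ) ∈ sCell := by
      rw [hsCell, Finset.mem_filter, Finset.mem_product]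
      refine ⟨⟨Finset.mem_range.mpr (by omega), Finset.mem_range.mpr (by omega)⟩, ?_⟩
      intro y hy
      refine ⟨(hmemC y).mpr ⟨j, hj, hsubG hy⟩, fun hyA => hxA ?_⟩
      obtain ⟨i, hi, hyi⟩ := (hmemA y).mp hyA
      have : interior (cell k l) ⊆ G i := hC1 k l i hk1 hl1 (by omega) ⟨y, hy, hyi⟩
      exact (hmemA x).mpr ⟨i, hi, this hxint⟩
    rw [hE]
    exact Or.inl (Set.mem_biUnion hmem (interior_subset hxint))
  -- null intersection with interior A
  have hnull : volume (E ∩ interior A) = 0 := by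
    have hsub : E ∩ interior A ⊆
        (⋃ p ∈ sCell, (cell p.1 p.2 \ interior (cell p.1 p.2))) ∪ (Ev ∪ Eh) := by
      rintro x ⟨hxE, hxA⟩
      rw [hE] at hxE
      rcases hxE with hxc | hxvh
      · left
        obtain ⟨s, hs, hxs⟩ := Set.mem_iUnion₂.mp hxc
        refine Set.mem_iUnion₂.mpr ⟨s, hs, hxs, fun hint => ?_⟩
        exact ((hsCell_mem s hs).2.2 hint).2 (interior_subset hxA)
      · exact Or.inr hxvh
    refine le_antisymm (le_trans (measure_mono hsub) ?_) (zero_le)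
    refine le_trans (measure_union_le _ _) ?_
    rw [hEvh_null, add_zero]
    refine le_trans (measure_biUnion_finset_le _ _) ?_
    refine le_of_eq (Finset.sum_eq_zero fun p hp => ?_)
    exact (hcell_rect p hp).frontier_null
  exact ⟨E, hE_fig, hE_sub, Set.Subset.antisymm
    (Set.union_subset Set.subset_union_left (fun x hx => Or.inr (hE_sub hx)))
    (Set.union_subset Set.subset_union_left hcover), hnull⟩

lemma exists_F_split (F : Set (ℝ × ℝ) → ℝ)
    (hadd : ∀ (n : ℕ) (C : ℕ → Set (ℝ × ℝ)),
      (∀ i < n, IsFigure (C i)) →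
      (∀ i < n, ∀ j < n, i ≠ j → interior (C i) ∩ interior (C j) = ∅) →
      F (⋃ i ∈ Finset.range n, C i) = ∑ i ∈ Finset.range n, F (C i))
    {A C : Set (ℝ×ℝ)} (hA : IsFigure A) (hC : IsFigure C) :
    ∃ E : Set (ℝ×ℝ), IsFigure E ∧ E ⊆ C ∧
      volume E ≤ volume (C \ interior A) ∧ F (A ∪ C) = F A + F E := by
  obtain ⟨E, hEfig, hEsub, hEeq, hEnull⟩ := figure_split hA hC
  have hdisj : interior A ∩ interior E = ∅ := interior_disjoint_of_null hEnull
  have hvol : volume E ≤ volume (C \ interior A) := by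
    have : E ⊆ (C \ interior A) ∪ (E ∩ interior A) := by
      intro x hx
      by_cases h : x ∈ interior A
      · exact Or.inr ⟨hx, h⟩
      · exact Or.inl ⟨hEsub hx, h⟩
    refine le_trans (measure_mono this) ?_
    refine le_trans (measure_union_le _ _) ?_
    rw [hEnull, add_zero]
  have hun : (⋃ i ∈ Finset.range 2, (fun i => if i = 0 then A else E) i) = A ∪ E := by
    ext x
    simp only [Set.mem_iUnion, Finset.mem_range, exists_prop, Set.mem_union]
    constructor
    · rintro ⟨i, hi, hx⟩
      rcases (by omega : i = 0 ∨ i = 1) with rfl | rfl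
      · exact Or.inl (by simpa using hx)
      · exact Or.inr (by simpa using hx)
    · rintro (hx | hx)
      · exact ⟨0, by omega, by simpa using hx⟩
      · exact ⟨1, by omega, by simpa using hx⟩
  have := hadd 2 (fun i => if i = 0 then A else E)
    (by
      intro i hi
      rcases (by omega : i = 0 ∨ i = 1) with rfl | rfl
      · simpa using hA
      · simpa using hEfig)
    (by
      intro i hi j hj hij
      rcases (by omega : i = 0 ∨ i = 1) with rfl | rfl <;>
        rcases (by omega : j = 0 ∨ j = 1) with rfl | rfl
      · exact absurd rfl hij
      · simpa using hdisj
      · simpa using (by rw [Set.inter_comm]; exact hdisj)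
      · exact absurd rfl hij)
  rw [hun] at this
  rw [Finset.sum_range_succ, Finset.sum_range_one] at this
  simp only [if_pos rfl, if_neg (by norm_num : (1:ℕ) ≠ 0)] at this
  have hAE : A ∪ E = A ∪ C := hEeq
  exact ⟨E, hEfig, hEsub, hvol, by rw [← hAE]; exact this⟩

/-- If `F` is a finitely additive figure function which is absolutely continuous (figures of
small Lebesgue measure have small `|F|`), then `F` integrates over every bounded Jordan
measurable set `S` (i.e. bounded with frontier of measure zero). -/
theorem integral_exists_of_absolutely_continuous (F : Set (ℝ × ℝ) → ℝ)
    (hadd : ∀ (n : ℕ) (C : ℕ → Set (ℝ × ℝ)),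
      (∀ i < n, IsFigure (C i)) →
      (∀ i < n, ∀ j < n, i ≠ j → interior (C i) ∩ interior (C j) = ∅) →
      F (⋃ i ∈ Finset.range n, C i) = ∑ i ∈ Finset.range n, F (C i))
    (hac : ∀ ε > 0, ∃ δ > 0, ∀ C : Set (ℝ × ℝ),
      IsFigure C → volume C < ENNReal.ofReal δ → |F C| < ε)
    (S : Set (ℝ × ℝ)) (hSb : Bornology.IsBounded S)
    (hSj : volume (frontier S) = 0) :
    ∃ I : ℝ, IntegratesTo F S I := by
  classical
  obtain ⟨r, hr⟩ := hSb.subset_closedBall 0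
  obtain ⟨M, hrM⟩ := exists_nat_ge r
  have hclos : ∀ x ∈ closure S, |x.1| ≤ (M:ℝ) ∧ |x.2| ≤ (M:ℝ) := by
    intro x hx
    have hx' : x ∈ Metric.closedBall (0 : ℝ×ℝ) r :=
      closure_minimal hr Metric.isClosed_closedBall hx
    have hd : dist x 0 ≤ r := Metric.mem_closedBall.mp hx'
    rw [Prod.dist_eq] at hd
    have h1 : dist x.1 (0:ℝ) ≤ r := le_trans (le_max_left _ _) hd
    have h2 : dist x.2 (0:ℝ) ≤ r := le_trans (le_max_right _ _) hd
    rw [Real.dist_eq, sub_zero] at h1 h2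
    exact ⟨le_trans h1 hrM, le_trans h2 hrM⟩
  -- dyadic squares
  set sq : ℕ → ℤ → ℤ → Set (ℝ×ℝ) := fun Nn i j =>
    Rect ((i:ℝ)/2^Nn) ((i+1:ℝ)/2^Nn) ((j:ℝ)/2^Nn) ((j+1:ℝ)/2^Nn) with hsq
  have hpow : ∀ Nn : ℕ, (0:ℝ) < 2^Nn := fun Nn => pow_pos two_pos Nn
  have hsq_rect : ∀ Nn i j, IsRect (sq Nn i j) := by
    intro Nn i j
    refine ⟨_, _, _, _, ?_, ?_, rfl⟩ <;>
      exact (div_le_div_iff_of_pos_right (hpow Nn)).mpr (by push_cast; linarith)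
  have hsq_int : ∀ Nn i j, interior (sq Nn i j) =
      Set.Ioo ((i:ℝ)/2^Nn) ((i+1:ℝ)/2^Nn) ×ˢ Set.Ioo ((j:ℝ)/2^Nn) ((j+1:ℝ)/2^Nn) := by
    intro Nn i j
    simp only [hsq, Rect, interior_prod_eq, interior_Icc]
  have hstep_le : ∀ (Nn : ℕ) (i i' : ℤ), i < i' → ((i:ℝ)+1)/2^Nn ≤ (i':ℝ)/2^Nn := by
    intro Nn i i' h
    refine (div_le_div_iff_of_pos_right (hpow Nn)).mpr ?_
    have : (i:ℝ) + 1 ≤ (i':ℝ) := by exact_mod_cast h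
    linarith
  have hsq_disj : ∀ Nn (p q : ℤ×ℤ), p ≠ q →
      interior (sq Nn p.1 p.2) ∩ interior (sq Nn q.1 q.2) = ∅ := by
    rintro Nn ⟨i, j⟩ ⟨i', j'⟩ hne
    ext z
    simp only [hsq_int, Set.mem_inter_iff, Set.mem_prod, Set.mem_Ioo,
      Set.mem_empty_iff_false, iff_false]
    rintro ⟨⟨⟨u1, u2⟩, u3, u4⟩, ⟨⟨v1, v2⟩, v3, v4⟩⟩
    rcases Int.lt_trichotomy i i' with h | rfl | h
    · have := hstep_le Nn i i' h; push_cast at this u2 v1; linarith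
    · rcases Int.lt_trichotomy j j' with h | rfl | h
      · have := hstep_le Nn j j' h; push_cast at this u4 v3; linarith
      · exact hne rfl
      · have := hstep_le Nn j' j h; push_cast at this u3 v4; linarith
    · have := hstep_le Nn i' i h; push_cast at this u1 v2; linarith
  set box : ℕ → Finset (ℤ×ℤ) := fun Nn =>
    Finset.Icc (-(M*2^Nn) : ℤ) (M*2^Nn) ×ˢ Finset.Icc (-(M*2^Nn) : ℤ) (M*2^Nn) with hbox
  set sB : ℕ → Finset (ℤ×ℤ) := fun Nn =>
    (box Nn).filter (fun p => (sq Nn p.1 p.2 ∩ closure S).Nonempty) with hsB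
  set sA : ℕ → Finset (ℤ×ℤ) := fun Nn =>
    (box Nn).filter (fun p => sq Nn p.1 p.2 ⊆ interior S) with hsA
  set Aset : ℕ → Set (ℝ×ℝ) := fun Nn => ⋃ p ∈ sA Nn, sq Nn p.1 p.2 with hAset
  set Bset : ℕ → Set (ℝ×ℝ) := fun Nn => ⋃ p ∈ sB Nn, sq Nn p.1 p.2 with hBset
  have hA_fig : ∀ Nn, IsFigure (Aset Nn) := fun Nn =>
    isFigure_biUnion _ _ (fun p _ => hsq_rect Nn p.1 p.2) (fun p _ q _ h => hsq_disj Nn p q h)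
  have hB_fig : ∀ Nn, IsFigure (Bset Nn) := fun Nn =>
    isFigure_biUnion _ _ (fun p _ => hsq_rect Nn p.1 p.2) (fun p _ q _ h => hsq_disj Nn p q h)
  have hA_sub : ∀ Nn, Aset Nn ⊆ interior S := by
    intro Nn
    refine Set.iUnion₂_subset fun p hp => ?_
    rw [hsA, Finset.mem_filter] at hp
    exact hp.2
  have hB_sup : ∀ Nn, closure S ⊆ Bset Nn := by
    intro Nn x hx
    set i : ℤ := ⌊x.1 * 2^Nn⌋ with hi
    set j : ℤ := ⌊x.2 * 2^Nn⌋ with hj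
    obtain ⟨hm1, hm2⟩ := hclos x hx
    have habs1 : -(M:ℝ) ≤ x.1 ∧ x.1 ≤ (M:ℝ) := abs_le.mp hm1
    have habs2 : -(M:ℝ) ≤ x.2 ∧ x.2 ≤ (M:ℝ) := abs_le.mp hm2
    have hxsq : x ∈ sq Nn i j := by
      refine ⟨⟨?_, ?_⟩, ?_, ?_⟩
      · exact (div_le_iff₀ (hpow Nn)).mpr (Int.floor_le _)
      · refine (le_div_iff₀ (hpow Nn)).mpr ?_
        push_cast
        exact (Int.lt_floor_add_one (x.1 * 2^Nn)).le
      · exact (div_le_iff₀ (hpow Nn)).mpr (Int.floor_le _)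
      · refine (le_div_iff₀ (hpow Nn)).mpr ?_
        push_cast
        exact (Int.lt_floor_add_one (x.2 * 2^Nn)).le
    have hibox : ∀ (u : ℝ), -(M:ℝ) ≤ u → u ≤ (M:ℝ) →
        -(M*2^Nn : ℤ) ≤ ⌊u * 2^Nn⌋ ∧ ⌊u * 2^Nn⌋ ≤ (M*2^Nn : ℤ) := by
      intro u h1 h2
      constructor
      · refine Int.le_floor.mpr ?_
        push_cast
        nlinarith [hpow Nn, mul_le_mul_of_nonneg_right h1 (hpow Nn).le, mul_le_mul_of_nonneg_right h2 (hpow Nn).le]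
      · have : (⌊u * 2^Nn⌋ : ℤ) ≤ ⌊((M*2^Nn : ℤ) : ℝ)⌋ := by
          refine Int.floor_le_floor ?_
          push_cast
          nlinarith [hpow Nn, mul_le_mul_of_nonneg_right h1 (hpow Nn).le, mul_le_mul_of_nonneg_right h2 (hpow Nn).le]
        rwa [Int.floor_intCast] at this
    have hpbox : (i, j) ∈ box Nn := by
      rw [hbox, Finset.mem_product, Finset.mem_Icc, Finset.mem_Icc]
      exact ⟨⟨(hibox x.1 habs1.1 habs1.2).1, (hibox x.1 habs1.1 habs1.2).2⟩,
        ⟨(hibox x.2 habs2.1 habs2.2).1, (hibox x.2 habs2.1 habs2.2).2⟩⟩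
    refine Set.mem_biUnion (show ((i,j) : ℤ×ℤ) ∈ sB Nn from ?_) hxsq
    rw [hsB, Finset.mem_filter]
    exact ⟨hpbox, ⟨x, hxsq, hx⟩⟩
  -- frontier thickening bound
  have hBA_sub : ∀ Nn, Bset Nn \ interior (Aset Nn) ⊆
      Metric.cthickening ((1/2)^Nn) (frontier S) ∪ (Aset Nn \ interior (Aset Nn)) := by
    intro Nn x hx
    obtain ⟨hxB, hxI⟩ := hx
    obtain ⟨p, hp, hxp⟩ := Set.mem_iUnion₂.mp hxB
    rw [hsB, Finset.mem_filter] at hp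
    obtain ⟨hpbox, hpne⟩ := hp
    by_cases hpa : sq Nn p.1 p.2 ⊆ interior S
    · refine Or.inr ⟨Set.mem_biUnion (show p ∈ sA Nn from ?_) hxp, hxI⟩
      rw [hsA, Finset.mem_filter]
      exact ⟨hpbox, hpa⟩
    · left
      -- the square meets the frontier
      have hfront : (sq Nn p.1 p.2 ∩ frontier S).Nonempty := by
        by_contra hempty
        rw [Set.not_nonempty_iff_eq_empty] at hempty
        have hdis : ∀ z ∈ sq Nn p.1 p.2, z ∉ frontier S := by
          intro z hz hzf
          exact absurd (Set.mem_inter hz hzf) (hempty ▸ Set.notMem_empty z)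
        have hsub : sq Nn p.1 p.2 ⊆ interior S ∪ (closure S)ᶜ := by
          intro z hz
          by_cases hzc : z ∈ closure S
          · refine Or.inl ?_
            by_contra hzi
            exact hdis z hz (by rw [← closure_diff_interior]; exact ⟨hzc, hzi⟩)
          · exact Or.inr hzc
        have hpre : IsPreconnected (sq Nn p.1 p.2) :=
          ((convex_Icc _ _).prod (convex_Icc _ _)).isPreconnected
        obtain ⟨z1, hz1⟩ := hpne
        have hz1' : z1 ∈ interior S := by
          rcases hsub hz1.1 with h | h
          · exact h
          · exact absurd hz1.2 h
        obtain ⟨z0, hz0⟩ := Set.not_subset.mp hpa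
        have hz0' : z0 ∈ (closure S)ᶜ := by
          rcases hsub hz0.1 with h | h
          · exact absurd h hz0.2
          · exact h
        obtain ⟨z, -, hzu, hzv⟩ := hpre (interior S) (closure S)ᶜ isOpen_interior
          (isClosed_closure.isOpen_compl) hsub ⟨z1, hz1.1, hz1'⟩ ⟨z0, hz0.1, hz0'⟩
        exact hzv (subset_closure (interior_subset hzu))
      obtain ⟨y, hy1, hy2⟩ := hfront
      refine Metric.mem_cthickening_of_dist_le x y _ _ hy2 ?_
      rw [Prod.dist_eq]
      have hlen : ∀ i : ℤ, ((i:ℝ)+1)/2^Nn - (i:ℝ)/2^Nn = (1/2:ℝ)^Nn := by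
        intro i
        rw [div_sub_div_same, add_sub_cancel_left, div_pow, one_pow]
      have h1 : dist x.1 y.1 ≤ (1/2:ℝ)^Nn := by
        rw [← hlen p.1]
        exact Real.dist_le_of_mem_Icc hxp.1 hy1.1
      have h2 : dist x.2 y.2 ≤ (1/2:ℝ)^Nn := by
        rw [← hlen p.2]
        exact Real.dist_le_of_mem_Icc hxp.2 hy1.2
      exact max_le h1 h2
  have hvol_bound : ∀ Nn, volume (Bset Nn \ interior (Aset Nn)) ≤
      volume (Metric.cthickening ((1/2)^Nn) (frontier S)) := by
    intro Nn
    refine le_trans (measure_mono (hBA_sub Nn)) ?_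
    refine le_trans (measure_union_le _ _) ?_
    rw [(hA_fig Nn).null_diff_interior, add_zero]
  have htend : Filter.Tendsto (fun Nn : ℕ => volume (Metric.cthickening ((1/2)^Nn) (frontier S)))
      Filter.atTop (nhds 0) := by
    have hfin : ∃ R, 0 < R ∧ volume (Metric.cthickening R (frontier S)) ≠ ⊤ := by
      refine ⟨1, one_pos, ?_⟩
      have hbd : Bornology.IsBounded (Metric.cthickening 1 (frontier S)) := by
        have : Bornology.IsBounded (frontier S) := by
          refine Bornology.IsBounded.subset hSb.closure ?_
          exact frontier_subset_closure
        exact this.cthickening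
      obtain ⟨r', hr'⟩ := hbd.subset_closedBall 0
      exact ne_top_of_le_ne_top (isCompact_closedBall (0:ℝ×ℝ) r').measure_lt_top.ne
        (measure_mono hr')
    have hmain := tendsto_measure_cthickening_of_isClosed hfin isClosed_frontier
    rw [hSj] at hmain
    have hg : Filter.Tendsto (fun Nn : ℕ => ((1:ℝ)/2)^Nn) Filter.atTop (nhds 0) :=
      tendsto_pow_atTop_nhds_zero_of_lt_one (by norm_num) (by norm_num)
    exact hmain.comp hg
  have hsmall : ∀ δ : ℝ, 0 < δ → ∀ᶠ Nn in Filter.atTop,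
      volume (Bset Nn \ interior (Aset Nn)) < ENNReal.ofReal δ := by
    intro δ hδ
    have := htend.eventually_lt_const (show (0:ENNReal) < ENNReal.ofReal δ by
      exact ENNReal.ofReal_pos.mpr hδ)
    filter_upwards [this] with Nn hNn
    exact lt_of_le_of_lt (hvol_bound Nn) hNn
  -- additive step
  have hstep : ∀ Nk (C' : Set (ℝ×ℝ)), IsFigure C' → C' ⊆ Bset Nk →
      ∃ E, IsFigure E ∧ F (Aset Nk ∪ C') = F (Aset Nk) + F E ∧
        volume E ≤ volume (Bset Nk \ interior (Aset Nk)) := by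
    intro Nk C' hC' hsub
    obtain ⟨E, hEfig, hEsub, hEvol, hEeq⟩ := exists_F_split F hadd (hA_fig Nk) hC'
    refine ⟨E, hEfig, hEeq, le_trans hEvol (measure_mono ?_)⟩
    exact fun z hz => ⟨hsub hz.1, hz.2⟩
  have hABk : ∀ Nk Nl, Aset Nl ⊆ Bset Nk := fun Nk Nl =>
    (hA_sub Nl).trans (interior_subset.trans (subset_closure.trans (hB_sup Nk)))
  -- Cauchy sequence
  set u : ℕ → ℝ := fun Nn => F (Aset Nn) with hu
  have hcauchy : CauchySeq u := by
    rw [Metric.cauchySeq_iff]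
    intro ε hε
    obtain ⟨δ, hδ, hδF⟩ := hac (ε/2) (by linarith)
    obtain ⟨N0, hN0⟩ := (hsmall δ hδ).exists_forall_of_atTop
    refine ⟨N0, fun Nk hk Nl hl => ?_⟩
    obtain ⟨E1, hE1f, hE1eq, hE1v⟩ := hstep Nk (Aset Nl) (hA_fig Nl) (hABk Nk Nl)
    obtain ⟨E2, hE2f, hE2eq, hE2v⟩ := hstep Nl (Aset Nk) (hA_fig Nk) (hABk Nl Nk)
    have hcomm : Aset Nk ∪ Aset Nl = Aset Nl ∪ Aset Nk := Set.union_comm _ _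
    have he1 : |F E1| < ε/2 := hδF E1 hE1f (lt_of_le_of_lt hE1v (hN0 Nk hk))
    have he2 : |F E2| < ε/2 := hδF E2 hE2f (lt_of_le_of_lt hE2v (hN0 Nl hl))
    have : u Nk + F E1 = u Nl + F E2 := by
      rw [hu]
      simp only
      rw [← hE1eq, ← hE2eq, hcomm]
    rw [Real.dist_eq]
    have : u Nk - u Nl = F E2 - F E1 := by linarith
    rw [this]
    calc |F E2 - F E1| ≤ |F E2| + |F E1| := abs_sub _ _
      _ < ε/2 + ε/2 := add_lt_add he2 he1
      _ = ε := by ring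
  obtain ⟨I, hI⟩ := cauchySeq_tendsto_of_complete hcauchy
  refine ⟨I, ?_⟩
  intro ε hε
  obtain ⟨δ, hδ, hδF⟩ := hac (ε/2) (by linarith)
  have hev1 := hsmall δ hδ
  have hev2 : ∀ᶠ Nn in Filter.atTop, |u Nn - I| < ε/2 := by
    have := Metric.tendsto_atTop.mp hI (ε/2) (by linarith)
    obtain ⟨N0, hN0⟩ := this
    filter_upwards [Filter.eventually_ge_atTop N0] with Nn hNn
    have := hN0 Nn hNn
    rwa [Real.dist_eq] at this
  obtain ⟨Nn, hNn1, hNn2⟩ := (hev1.and hev2).exists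
  refine ⟨Aset Nn, Bset Nn, hA_fig Nn, hB_fig Nn, hA_sub Nn, hB_sup Nn, ?_⟩
  intro C' hC' hAC hCB
  obtain ⟨E, hEf, hEeq, hEv⟩ := hstep Nn C' hC' hCB
  rw [Set.union_eq_self_of_subset_left hAC] at hEeq
  have hFE : |F E| < ε/2 := hδF E hEf (lt_of_le_of_lt hEv hNn1)
  have : F C' - I = (F E) + (u Nn - I) := by
    rw [hEeq, hu]; ring
  rw [this]
  calc |F E + (u Nn - I)| ≤ |F E| + |u Nn - I| := abs_add_le _ _
    _ < ε/2 + ε/2 := add_lt_add hFE hNn2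
    _ = ε := by ring
end

section
/- If γ : [0,1] → ℝ² is continuous and of bounded variation (its total variation eVariationOn γ [0,1] is finite), then the image γ([0,1]) has two-dimensional Lebesgue measure zero. -/
/-!
A curve of locally bounded variation factors through its arc-length function: `f = φ ∘ v` on
`s`, where `v = variationOnFromTo f s a` and the natural parametrisation `φ` has unit speed, hence
is 1-Lipschitz, on `v '' s ⊆ ℝ`. A Lipschitz image of a subset of `ℝ` has Hausdorff dimension at
most `1`, so it is null for the 2-dimensional Hausdorff measure, which is Lebesgue measure on
`ℝ × ℝ`.
-/

open MeasureTheory Set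
open scoped NNReal

theorem HasConstantSpeedOnWith.lipschitzOnWith {E : Type*} [PseudoEMetricSpace E] {f : ℝ → E}
    {s : Set ℝ} {l : ℝ≥0} (h : HasConstantSpeedOnWith f s l) : LipschitzOnWith l f s := by
  have of_le : ∀ ⦃x⦄, x ∈ s → ∀ ⦃y⦄, y ∈ s → x ≤ y → edist (f x) (f y) ≤ l * edist x y := by
    intro x hx y hy hxy
    calc edist (f x) (f y) ≤ eVariationOn f (s ∩ Icc x y) :=
          eVariationOn.edist_le f ⟨hx, le_rfl, hxy⟩ ⟨hy, hxy, le_rfl⟩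
      _ = ENNReal.ofReal (l * (y - x)) := h hx hy
      _ = l * edist x y := by
        rw [ENNReal.ofReal_mul l.coe_nonneg, ENNReal.ofReal_coe_nnreal, edist_dist,
          Real.dist_eq, abs_sub_comm, abs_of_nonneg (sub_nonneg.2 hxy)]
  intro x hx y hy
  rcases le_total x y with hxy | hyx
  · exact of_le hx hy hxy
  · rw [edist_comm, edist_comm x]
    exact of_le hy hx hyx

theorem LocallyBoundedVariationOn.image_eq_naturalParameterization_image {α E : Type*}
    [LinearOrder α] [EMetricSpace E] {f : α → E} {s : Set α}
    (hf : LocallyBoundedVariationOn f s) {a : α} (ha : a ∈ s) :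
    f '' s = naturalParameterization f s a '' (variationOnFromTo f s a '' s) := by
  rw [← image_comp]
  refine image_congr fun b hb => ?_
  exact (edist_eq_zero.1 (edist_naturalParameterization_eq_zero hf ha hb)).symm

theorem LocallyBoundedVariationOn.dimH_image_le_one {α E : Type*} [LinearOrder α]
    [EMetricSpace E] {f : α → E} {s : Set α} (hf : LocallyBoundedVariationOn f s) :
    dimH (f '' s) ≤ 1 := by
  rcases s.eq_empty_or_nonempty with rfl | ⟨a, ha⟩
  · simp
  rw [hf.image_eq_naturalParameterization_image ha]
  calc dimH (naturalParameterization f s a '' (variationOnFromTo f s a '' s))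
      ≤ dimH (variationOnFromTo f s a '' s) :=
        (has_unit_speed_naturalParameterization f hf ha).lipschitzOnWith.dimH_image_le
    _ ≤ dimH (univ : Set ℝ) := dimH_mono (subset_univ _)
    _ = 1 := Real.dimH_univ

theorem rectifiable_curve_image_null_general (γ : ℝ → ℝ × ℝ)
    (hbv : eVariationOn γ (Set.Icc 0 1) < ⊤) :
    volume (γ '' Set.Icc 0 1) = 0 := by
  have hdim : dimH (γ '' Icc 0 1) ≤ 1 :=
    (BoundedVariationOn.locallyBoundedVariationOn hbv.ne).dimH_image_le_one
  rw [← hausdorffMeasure_prod_real]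
  exact_mod_cast hausdorffMeasure_of_dimH_lt (d := 2) (hdim.trans_lt (by norm_num))

/-- The image of a rectifiable curve (continuous, of bounded variation) in the plane has
two-dimensional Lebesgue measure zero. -/
theorem rectifiable_curve_image_null (γ : ℝ → ℝ × ℝ)
    (hc : ContinuousOn γ (Set.Icc 0 1))
    (hbv : eVariationOn γ (Set.Icc 0 1) < ⊤) :
    volume (γ '' Set.Icc 0 1) = 0 :=
  rectifiable_curve_image_null_general γ hbv
end

section
/- Let γ : [0,1] → ℝ² be a closed rectifiable curve (γ(0) = γ(1), γ continuous of bounded variation) and let f : ℝ² → ℝ² be continuous on the image of γ, with line integral I = ∫_γ f · dγ. Let ω = sup over pairs of points p, q in the image of γ of ‖f(p) − f(q)‖. Then |I| ≤ ω · L, where L = eVariationOn γ [0,1] is the length of γ: the circumferential line integral is bounded by the oscillation of the integrand times the arc length. -/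
/-
Since the increments of a closed polygon sum to zero, a Riemann–Stieltjes sum along a closed
curve does not change when the constant `f (γ 0)` is subtracted from the integrand. Each term
is then at most `‖f (γ sᵢ) - f (γ 0)‖ · ‖γ tᵢ₊₁ - γ tᵢ‖ ≤ ω ‖γ tᵢ₊₁ - γ tᵢ‖`, and the
lengths of the chords add up to at most the length of the curve. Passing to the limit along
uniform partitions bounds the integral.
-/

open MeasureTheory

/-- The Riemann–Stieltjes sum of `f` along `γ` for the tagged partition with division
points `t 0, …, t n` and tags `s 0, …, s (n-1)`. -/
noncomputable def RSSum (γ : ℝ → EuclideanSpace ℝ (Fin 2))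
    (f : EuclideanSpace ℝ (Fin 2) → EuclideanSpace ℝ (Fin 2))
    (n : ℕ) (t s : ℕ → ℝ) : ℝ :=
  ∑ i ∈ Finset.range n, (inner ℝ (f (γ (s i))) (γ (t (i + 1)) - γ (t i)) : ℝ)

/-- `I` is the Riemann–Stieltjes line integral of `f` along `γ` over `[0,1]`. -/
def IsRSIntegral (γ : ℝ → EuclideanSpace ℝ (Fin 2))
    (f : EuclideanSpace ℝ (Fin 2) → EuclideanSpace ℝ (Fin 2)) (I : ℝ) : Prop :=
  ∀ ε > (0 : ℝ), ∃ δ > (0 : ℝ), ∀ (n : ℕ) (t s : ℕ → ℝ),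
    t 0 = 0 → t n = 1 →
    (∀ i < n, t i ≤ t (i + 1)) →
    (∀ i < n, s i ∈ Set.Icc (t i) (t (i + 1))) →
    (∀ i < n, t (i + 1) - t i < δ) →
    |RSSum γ f n t s - I| < ε

open Finset Filter Topology

section ClosedPolygon

variable {E : Type*} [NormedAddCommGroup E] [InnerProductSpace ℝ E]

theorem sum_inner_sub_eq_of_closed {n : ℕ} {x : ℕ → E} (hx : x n = x 0) (v : ℕ → E) (c : E) :
    ∑ i ∈ range n, inner ℝ (v i - c) (x (i + 1) - x i) =
      ∑ i ∈ range n, inner ℝ (v i) (x (i + 1) - x i) := by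
  have hsum : ∑ i ∈ range n, (x (i + 1) - x i) = 0 := by
    rw [sum_range_sub, hx, sub_self]
  simp only [inner_sub_left, sum_sub_distrib, ← inner_sum, hsum, inner_zero_right, sub_zero]

theorem abs_sum_inner_le_of_closed {n : ℕ} {x v : ℕ → E} (hx : x n = x 0) (c : E) {ω : ℝ}
    (hv : ∀ i < n, ‖v i - c‖ ≤ ω) :
    |∑ i ∈ range n, inner ℝ (v i) (x (i + 1) - x i)| ≤
      ω * ∑ i ∈ range n, ‖x (i + 1) - x i‖ := by
  rw [← sum_inner_sub_eq_of_closed hx v c, mul_sum]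
  refine (abs_sum_le_sum_abs _ _).trans (sum_le_sum fun i hi => ?_)
  exact (abs_real_inner_le_norm _ _).trans
    (mul_le_mul_of_nonneg_right (hv i (mem_range.1 hi)) (norm_nonneg _))

end ClosedPolygon

theorem sum_norm_sub_le_eVariationOn_toReal {α E : Type*} [LinearOrder α]
    [SeminormedAddCommGroup E] {γ : α → E} {s : Set α} (hγ : eVariationOn γ s ≠ ⊤) {n : ℕ}
    {t : ℕ → α} (ht : MonotoneOn t (Set.Iic n)) (hts : ∀ i ≤ n, t i ∈ s) :
    ∑ i ∈ range n, ‖γ (t (i + 1)) - γ (t i)‖ ≤ (eVariationOn γ s).toReal := by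
  rw [← ENNReal.ofReal_le_iff_le_toReal hγ, ENNReal.ofReal_sum_of_nonneg fun _ _ => norm_nonneg _]
  simpa only [edist_eq_enorm_sub, ← ofReal_norm] using
    eVariationOn.sum_le_of_monotoneOn_Iic (f := γ) ht hts

theorem norm_sub_le_sSup_of_isCompact {X F : Type*} [TopologicalSpace X]
    [SeminormedAddCommGroup F] {f : X → F} {K : Set X} (hK : IsCompact K)
    (hf : ContinuousOn f K) {p q : X} (hp : p ∈ K) (hq : q ∈ K) :
    ‖f p - f q‖ ≤ sSup {x : ℝ | ∃ p ∈ K, ∃ q ∈ K, x = ‖f p - f q‖} := by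
  obtain ⟨C, hC⟩ := hK.exists_bound_of_continuousOn hf
  refine le_csSup ⟨C + C, ?_⟩ ⟨p, hp, q, hq, rfl⟩
  rintro _ ⟨p, hp, q, hq, rfl⟩
  exact (norm_sub_le _ _).trans (add_le_add (hC p hp) (hC q hq))

section RiemannStieltjes

variable {γ : ℝ → EuclideanSpace ℝ (Fin 2)}
  {f : EuclideanSpace ℝ (Fin 2) → EuclideanSpace ℝ (Fin 2)}

theorem abs_RSSum_le_of_closed (hclosed : γ 0 = γ 1)
    (hbv : eVariationOn γ (Set.Icc 0 1) ≠ ⊤) {ω : ℝ}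
    (hosc : ∀ a ∈ Set.Icc (0 : ℝ) 1, ‖f (γ a) - f (γ 0)‖ ≤ ω) {n : ℕ} {t s : ℕ → ℝ}
    (ht0 : t 0 = 0) (htn : t n = 1) (ht : MonotoneOn t (Set.Iic n))
    (hs : ∀ i < n, s i ∈ Set.Icc 0 1) :
    |RSSum γ f n t s| ≤ ω * (eVariationOn γ (Set.Icc 0 1)).toReal := by
  have hω : 0 ≤ ω := by simpa using hosc 0 (Set.left_mem_Icc.2 zero_le_one)
  have ht_mem : ∀ i ≤ n, t i ∈ Set.Icc 0 1 := fun i (hi : i ∈ Set.Iic n) =>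
    ⟨ht0 ▸ ht (Nat.zero_le n) hi (Nat.zero_le i), htn ▸ ht hi Set.self_mem_Iic hi⟩
  calc |RSSum γ f n t s|
      ≤ ω * ∑ i ∈ range n, ‖γ (t (i + 1)) - γ (t i)‖ :=
        abs_sum_inner_le_of_closed (x := γ ∘ t) (by simp [ht0, htn, hclosed]) _
          fun i hi => hosc _ (hs i hi)
    _ ≤ ω * (eVariationOn γ (Set.Icc 0 1)).toReal :=
        mul_le_mul_of_nonneg_left (sum_norm_sub_le_eVariationOn_toReal hbv ht ht_mem) hω

theorem IsRSIntegral.tendsto_RSSum_uniform {I : ℝ} (hI : IsRSIntegral γ f I) :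
    Tendsto (fun n : ℕ => RSSum γ f n (fun i => i / n) (fun i => i / n)) atTop (𝓝 I) := by
  refine Metric.tendsto_atTop.2 fun ε hε => ?_
  obtain ⟨δ, hδ, hI⟩ := hI ε hε
  obtain ⟨N, hN⟩ := exists_nat_gt δ⁻¹
  refine ⟨N, fun n hNn => ?_⟩
  replace hNn : (N : ℝ) ≤ n := Nat.cast_le.2 hNn
  have hn : (0 : ℝ) < n := (inv_pos.2 hδ).trans (hN.trans_le hNn)
  have hmono : ∀ i < n, (i : ℝ) / n ≤ (i + 1 : ℕ) / n := fun i _ => by gcongr; simp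
  refine hI n _ _ (by simp) (div_self hn.ne') hmono (fun i hi => ⟨le_rfl, hmono i hi⟩)
    fun i _ => ?_
  rw [Nat.cast_succ, ← sub_div, add_sub_cancel_left, div_lt_iff₀' hn]
  rw [inv_lt_iff_one_lt_mul₀ hδ] at hN
  exact hN.trans_le (by gcongr)

end RiemannStieltjes

/-- The line integral of `f` around a closed rectifiable curve is bounded by the
oscillation of `f` on the curve times the arc length of the curve. -/
theorem line_integral_le_oscillation_mul_length (γ : ℝ → EuclideanSpace ℝ (Fin 2))
    (hclosed : γ 0 = γ 1)
    (hc : ContinuousOn γ (Set.Icc 0 1))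
    (hbv : eVariationOn γ (Set.Icc 0 1) < ⊤)
    (f : EuclideanSpace ℝ (Fin 2) → EuclideanSpace ℝ (Fin 2))
    (hf : ContinuousOn f (γ '' Set.Icc 0 1))
    (I : ℝ) (hI : IsRSIntegral γ f I)
    (ω : ℝ)
    (hω : ω = sSup {x : ℝ | ∃ p ∈ γ '' Set.Icc 0 1, ∃ q ∈ γ '' Set.Icc 0 1,
      x = ‖f p - f q‖}) :
    |I| ≤ ω * (eVariationOn γ (Set.Icc 0 1)).toReal := by
  have hK : IsCompact (γ '' Set.Icc 0 1) := isCompact_Icc.image_of_continuousOn hc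
  have hosc : ∀ a ∈ Set.Icc (0 : ℝ) 1, ‖f (γ a) - f (γ 0)‖ ≤ ω := fun a ha =>
    hω ▸ norm_sub_le_sSup_of_isCompact hK hf (Set.mem_image_of_mem γ ha)
      (Set.mem_image_of_mem γ (Set.left_mem_Icc.2 zero_le_one))
  refine le_of_tendsto hI.tendsto_RSSum_uniform.abs (eventually_atTop.2 ⟨1, fun n hn => ?_⟩)
  have hn : (n : ℝ) ≠ 0 := by positivity
  have hmono : MonotoneOn (fun i : ℕ => (i : ℝ) / n) (Set.Iic n) := fun i _ j _ hij => by
    dsimp only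
    gcongr
  exact abs_RSSum_le_of_closed hclosed hbv.ne hosc (by simp) (div_self hn) hmono
    fun i hi => ⟨by positivity, (div_le_one (by positivity)).2 (by exact_mod_cast hi.le)⟩
end

section
/- Let f : ℝ² → ℝ be bounded and Lebesgue measurable, and let F be the figure function F(C) = ∫_C f dλ (two-dimensional Lebesgue integral). Then F is finitely additive on figures with pairwise disjoint interiors, F is absolutely continuous (for every ε > 0 there is δ > 0 such that |F(C)| < ε for every figure C of Lebesgue measure less than δ), and for every bounded Jordan measurable set S ⊆ ℝ², F integrates to ∫_S f dλ over S. -/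
open MeasureTheory

/-! ### Auxiliary lemmas -/

lemma isRect_measurable {R : Set (ℝ × ℝ)} (h : IsRect R) : MeasurableSet R := by
  obtain ⟨a, b, c, d, -, -, rfl⟩ := h
  exact (measurableSet_Icc.prod measurableSet_Icc)

lemma isRect_volume_lt_top {R : Set (ℝ × ℝ)} (h : IsRect R) : volume R < ⊤ := by
  obtain ⟨a, b, c, d, -, -, rfl⟩ := h
  rw [Rect, Measure.volume_eq_prod, Measure.prod_prod, Real.volume_Icc, Real.volume_Icc]
  exact ENNReal.mul_lt_top ENNReal.ofReal_lt_top ENNReal.ofReal_lt_top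

lemma isRect_null_frontier {R : Set (ℝ × ℝ)} (h : IsRect R) : volume (frontier R) = 0 := by
  obtain ⟨a, b, c, d, hab, hcd, rfl⟩ := h
  have hint : interior (Rect a b c d) = Set.Ioo a b ×ˢ Set.Ioo c d := by
    rw [Rect, interior_prod_eq, interior_Icc, interior_Icc]
  have hcl : IsClosed (Rect a b c d) := (isClosed_Icc).prod isClosed_Icc
  have hvol : volume (interior (Rect a b c d)) = volume (Rect a b c d) := by
    rw [hint, Rect, Measure.volume_eq_prod, Measure.prod_prod, Measure.prod_prod,
      Real.volume_Icc, Real.volume_Icc, Real.volume_Ioo, Real.volume_Ioo]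
  have : frontier (Rect a b c d) = Rect a b c d \ interior (Rect a b c d) := by
    rw [frontier, hcl.closure_eq]
  rw [this, measure_diff interior_subset (measurableSet_interior).nullMeasurableSet
    (hvol ▸ (isRect_volume_lt_top ⟨a,b,c,d,hab,hcd,rfl⟩).ne), hvol, tsub_self]

lemma isRect_isClosed {R : Set (ℝ × ℝ)} (h : IsRect R) : IsClosed R := by
  obtain ⟨a, b, c, d, -, -, rfl⟩ := h
  exact isClosed_Icc.prod isClosed_Icc

lemma isFigure_measurable {C : Set (ℝ × ℝ)} (h : IsFigure C) : MeasurableSet C := by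
  obtain ⟨n, R, hR, -, rfl⟩ := h
  refine MeasurableSet.biUnion (Finset.range n).countable_toSet fun i hi => ?_
  exact isRect_measurable (hR i (Finset.mem_range.mp hi))

lemma isFigure_volume_lt_top {C : Set (ℝ × ℝ)} (h : IsFigure C) : volume C < ⊤ := by
  obtain ⟨n, R, hR, -, rfl⟩ := h
  calc volume (⋃ i ∈ Finset.range n, R i) ≤ ∑ i ∈ Finset.range n, volume (R i) :=
        measure_biUnion_finset_le _ _
    _ < ⊤ := ENNReal.sum_lt_top.mpr fun i hi =>
        isRect_volume_lt_top (hR i (Finset.mem_range.mp hi))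

lemma isFigure_null_diff_interior {C : Set (ℝ × ℝ)} (h : IsFigure C) :
    volume (C \ interior C) = 0 := by
  obtain ⟨n, R, hR, -, rfl⟩ := h
  have hsub : (⋃ i ∈ Finset.range n, R i) \ interior (⋃ i ∈ Finset.range n, R i) ⊆
      ⋃ i ∈ Finset.range n, frontier (R i) := by
    intro x ⟨hx, hx2⟩
    simp only [Set.mem_iUnion] at hx ⊢
    obtain ⟨i, hi, hxi⟩ := hx
    refine ⟨i, hi, ?_⟩
    rw [(isRect_isClosed (hR i (Finset.mem_range.mp hi))).frontier_eq]
    refine ⟨hxi, fun hxint => hx2 ?_⟩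
    exact interior_mono (Set.subset_biUnion_of_mem hi) hxint
  refine measure_mono_null hsub ?_
  refine measure_biUnion_null_iff (Finset.range n).countable_toSet |>.mpr fun i hi => ?_
  exact isRect_null_frontier (hR i (Finset.mem_range.mp hi))

lemma integrableOn_of_bdd {f : ℝ × ℝ → ℝ} {s : Set (ℝ × ℝ)} (hmeas : Measurable f) {M : ℝ}
    (hbdd : ∀ x, |f x| ≤ M) (hs : volume s < ⊤) : IntegrableOn f s := by
  refine Integrable.mono' (g := fun _ => M) ?_ hmeas.aestronglyMeasurable
    (ae_of_all _ fun x => (Real.norm_eq_abs _).le.trans (hbdd x))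
  exact integrableOn_const hs.ne

lemma isFigure_inter_null {A B : Set (ℝ × ℝ)} (hA : IsFigure A) (hB : IsFigure B)
    (h : interior A ∩ interior B = ∅) : volume (A ∩ B) = 0 := by
  have hsub : A ∩ B ⊆ (A \ interior A) ∪ (B \ interior B) := by
    intro x ⟨hxA, hxB⟩
    by_cases hx : x ∈ interior A
    · right
      exact ⟨hxB, fun hx2 => Set.eq_empty_iff_forall_notMem.mp h x ⟨hx, hx2⟩⟩
    · exact Or.inl ⟨hxA, hx⟩
  exact measure_mono_null hsub (measure_union_null
    (isFigure_null_diff_interior hA) (isFigure_null_diff_interior hB))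

lemma figure_additive {f : ℝ × ℝ → ℝ} (hmeas : Measurable f) {M : ℝ}
    (hbdd : ∀ x, |f x| ≤ M) :
    ∀ (n : ℕ) (C : ℕ → Set (ℝ × ℝ)),
      (∀ i < n, IsFigure (C i)) →
      (∀ i < n, ∀ j < n, i ≠ j → interior (C i) ∩ interior (C j) = ∅) →
      ∫ x in (⋃ i ∈ Finset.range n, C i), f x = ∑ i ∈ Finset.range n, ∫ x in C i, f x := by
  intro n
  induction n with
  | zero => intro C _ _; simp
  | succ n ih =>
    intro C hfig hdisj
    have hstep : ∀ i < n, ∀ j < n, i ≠ j → interior (C i) ∩ interior (C j) = ∅ :=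
      fun i hi j hj => hdisj i (hi.trans (Nat.lt_succ_self n)) j (hj.trans (Nat.lt_succ_self n))
    have hfign : ∀ i < n, IsFigure (C i) := fun i hi => hfig i (hi.trans (Nat.lt_succ_self n))
    rw [Finset.range_add_one]
    have hU : (⋃ i ∈ insert n (Finset.range n), C i) = (⋃ i ∈ Finset.range n, C i) ∪ C n := by
      simp [Set.biUnion_insert, Set.union_comm]
    rw [hU, Finset.sum_insert Finset.notMem_range_self]
    have hvolU : volume (⋃ i ∈ Finset.range n, C i) < ⊤ := by
      calc volume (⋃ i ∈ Finset.range n, C i) ≤ ∑ i ∈ Finset.range n, volume (C i) :=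
            measure_biUnion_finset_le _ _
        _ < ⊤ := ENNReal.sum_lt_top.mpr fun i hi =>
            isFigure_volume_lt_top (hfign i (Finset.mem_range.mp hi))
    have hae : AEDisjoint volume (⋃ i ∈ Finset.range n, C i) (C n) := by
      have : (⋃ i ∈ Finset.range n, C i) ∩ C n ⊆ ⋃ i ∈ Finset.range n, (C i ∩ C n) := by
        intro x ⟨hx1, hx2⟩
        simp only [Set.mem_iUnion] at hx1 ⊢
        obtain ⟨i, hi, hxi⟩ := hx1
        exact ⟨i, hi, hxi, hx2⟩
      refine measure_mono_null this ?_
      refine measure_biUnion_null_iff (Finset.range n).countable_toSet |>.mpr fun i hi => ?_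
      have hi' := Finset.mem_range.mp hi
      exact isFigure_inter_null (hfign i hi') (hfig n (Nat.lt_succ_self n))
        (hdisj i (hi'.trans (Nat.lt_succ_self n)) n (Nat.lt_succ_self n) hi'.ne)
    rw [integral_union_ae hae (isFigure_measurable (hfig n (Nat.lt_succ_self n))).nullMeasurableSet
      (integrableOn_of_bdd hmeas hbdd hvolU)
      (integrableOn_of_bdd hmeas hbdd (isFigure_volume_lt_top (hfig n (Nat.lt_succ_self n)))),
      ih C hfign hstep, add_comm]

/-! ### Grid cells -/

/-- Grid cell of side `w` with origin `o`. -/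
def gcell (w o : ℝ) (p : ℕ × ℕ) : Set (ℝ × ℝ) :=
  Rect (o + p.1 * w) (o + (p.1 + 1) * w) (o + p.2 * w) (o + (p.2 + 1) * w)

lemma gcell_isRect {w : ℝ} (hw : 0 ≤ w) (o : ℝ) (p : ℕ × ℕ) : IsRect (gcell w o p) := by
  refine ⟨_, _, _, _, ?_, ?_, rfl⟩ <;> nlinarith [Nat.cast_nonneg (α := ℝ) p.1]

lemma interior_gcell (w o : ℝ) (p : ℕ × ℕ) :
    interior (gcell w o p) =
      Set.Ioo (o + p.1 * w) (o + (p.1 + 1) * w) ×ˢ Set.Ioo (o + p.2 * w) (o + (p.2 + 1) * w) := by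
  rw [gcell, Rect, interior_prod_eq, interior_Icc, interior_Icc]

lemma grid_Ioo_disjoint {w o : ℝ} (hw : 0 < w) {i j : ℕ} (hij : i ≠ j) {x : ℝ}
    (h1 : x ∈ Set.Ioo (o + (i:ℝ) * w) (o + ((i:ℝ) + 1) * w))
    (h2 : x ∈ Set.Ioo (o + (j:ℝ) * w) (o + ((j:ℝ) + 1) * w)) : False := by
  rcases Nat.lt_or_ge i j with h | h
  · have : ((i:ℝ) + 1) ≤ (j:ℝ) := by exact_mod_cast h
    nlinarith [h1.2, h2.1]
  · have h' : j < i := lt_of_le_of_ne h (Ne.symm hij)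
    have : ((j:ℝ) + 1) ≤ (i:ℝ) := by exact_mod_cast h'
    nlinarith [h2.2, h1.1]

lemma gcell_interior_disjoint {w : ℝ} (hw : 0 < w) (o : ℝ) {p q : ℕ × ℕ} (hpq : p ≠ q) :
    interior (gcell w o p) ∩ interior (gcell w o q) = ∅ := by
  rw [interior_gcell, interior_gcell]
  ext x
  simp only [Set.mem_inter_iff, Set.mem_prod, Set.mem_empty_iff_false, iff_false]
  rintro ⟨⟨h1, h2⟩, ⟨h3, h4⟩⟩
  by_cases hfst : p.1 = q.1
  · have hsnd : p.2 ≠ q.2 := fun h => hpq (Prod.ext hfst h)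
    exact grid_Ioo_disjoint hw hsnd h2 h4
  · exact grid_Ioo_disjoint hw hfst h1 h3

lemma grid_isFigure {w : ℝ} (hw : 0 < w) (o : ℝ) (T : Finset (ℕ × ℕ)) :
    IsFigure (⋃ p ∈ T, gcell w o p) := by
  classical
  refine ⟨T.card, fun k => if h : k < T.card then gcell w o (T.equivFin.symm ⟨k, h⟩) else ∅,
    ?_, ?_, ?_⟩
  · intro i hi
    simp only [dif_pos hi]
    exact gcell_isRect hw.le o _
  · intro i hi j hj hij
    simp only [dif_pos hi, dif_pos hj]
    refine gcell_interior_disjoint hw o ?_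
    intro hEq
    apply hij
    have := T.equivFin.symm.injective (Subtype.ext hEq)
    simpa using congrArg Fin.val this
  · ext x
    simp only [Set.mem_iUnion, Finset.mem_range]
    constructor
    · rintro ⟨p, hp, hx⟩
      refine ⟨(T.equivFin ⟨p, hp⟩ : Fin T.card).val, ⟨(T.equivFin ⟨p, hp⟩).isLt, ?_⟩⟩
      simp only [dif_pos (T.equivFin ⟨p, hp⟩).isLt]
      have : T.equivFin.symm ⟨(T.equivFin ⟨p, hp⟩ : Fin T.card).val,
          (T.equivFin ⟨p, hp⟩).isLt⟩ = ⟨p, hp⟩ := by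
        rw [Fin.eta]
        exact T.equivFin.symm_apply_apply _
      rw [this]
      exact hx
    · rintro ⟨k, hk, hx⟩
      simp only [dif_pos hk] at hx
      exact ⟨T.equivFin.symm ⟨k, hk⟩, (T.equivFin.symm ⟨k, hk⟩).2, hx⟩

/-- Each coordinate in `[-K,K]` lies in some grid interval. -/
lemma coord_cover {K w : ℝ} (hw : 0 < w) {t : ℝ} (ht : |t| ≤ K) :
    ∃ i < Nat.floor (2 * K / w) + 1, t ∈ Set.Icc (-K + (i:ℝ) * w) (-K + ((i:ℝ) + 1) * w) := by
  have habs := abs_le.mp ht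
  have h0 : 0 ≤ (t + K) / w := div_nonneg (by linarith) hw.le
  refine ⟨Nat.floor ((t + K) / w), ?_, ?_, ?_⟩
  · have : Nat.floor ((t + K) / w) ≤ Nat.floor (2 * K / w) :=
      Nat.floor_mono (by gcongr; linarith)
    omega
  · have h1 := (le_div_iff₀ hw).mp (Nat.floor_le h0)
    linarith
  · have h2 := (div_le_iff₀ hw).mp (Nat.lt_floor_add_one ((t + K) / w)).le
    linarith

lemma gcell_diam {w o : ℝ} (hw : 0 ≤ w) {p : ℕ × ℕ} {x y : ℝ × ℝ}
    (hx : x ∈ gcell w o p) (hy : y ∈ gcell w o p) : dist x y ≤ w := by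
  obtain ⟨hx1, hx2⟩ := hx
  obtain ⟨hy1, hy2⟩ := hy
  rw [Prod.dist_eq]
  have d1 : dist x.1 y.1 ≤ w := by
    have := Real.dist_le_of_mem_Icc hx1 hy1
    have heq : (o + ((p.1:ℝ) + 1) * w) - (o + (p.1:ℝ) * w) = w := by ring
    linarith [heq ▸ this]
  have d2 : dist x.2 y.2 ≤ w := by
    have := Real.dist_le_of_mem_Icc hx2 hy2
    have heq : (o + ((p.2:ℝ) + 1) * w) - (o + (p.2:ℝ) * w) = w := by ring
    linarith [heq ▸ this]
  exact max_le d1 d2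

lemma gcell_preconnected (w o : ℝ) (p : ℕ × ℕ) : IsPreconnected (gcell w o p) :=
  ((convex_Icc _ _).prod (convex_Icc _ _)).isPreconnected

/-- A cell meeting the closure of `S` but not contained in the interior meets the frontier. -/
lemma gcell_meets_frontier {w o : ℝ} {p : ℕ × ℕ} {S : Set (ℝ × ℝ)}
    (h1 : (gcell w o p ∩ closure S).Nonempty) (h2 : ¬ gcell w o p ⊆ interior S) :
    (gcell w o p ∩ frontier S).Nonempty := by
  by_contra hfr
  rw [Set.not_nonempty_iff_eq_empty] at hfr
  have hsub : gcell w o p ⊆ interior S ∪ (closure S)ᶜ := by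
    intro x hx
    by_cases hcl : x ∈ closure S
    · left
      by_contra hint
      exact Set.eq_empty_iff_forall_notMem.mp hfr x ⟨hx, hcl, hint⟩
    · exact Or.inr hcl
  rcases (gcell_preconnected w o p).subset_or_subset isOpen_interior
      (isClosed_closure).isOpen_compl
      (Set.disjoint_compl_right_iff_subset.mpr interior_subset_closure) hsub with h | h
  · exact h2 h
  · obtain ⟨x, hx, hxc⟩ := h1
    exact (h hx) hxc

/-- For a bounded measurable `f : ℝ² → ℝ`, the figure function `C ↦ ∫_C f` is finitely
additive on figures with pairwise disjoint interiors, absolutely continuous, and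
integrates to `∫_S f` over every bounded Jordan measurable set `S`. -/
theorem lebesgue_figure_function_integrates (f : ℝ × ℝ → ℝ)
    (hmeas : Measurable f) (M : ℝ) (hbdd : ∀ x, |f x| ≤ M)
    (F : Set (ℝ × ℝ) → ℝ) (hF : ∀ C : Set (ℝ × ℝ), F C = ∫ x in C, f x) :
    (∀ (n : ℕ) (C : ℕ → Set (ℝ × ℝ)),
      (∀ i < n, IsFigure (C i)) →
      (∀ i < n, ∀ j < n, i ≠ j → interior (C i) ∩ interior (C j) = ∅) →
      F (⋃ i ∈ Finset.range n, C i) = ∑ i ∈ Finset.range n, F (C i)) ∧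
    (∀ ε > (0 : ℝ), ∃ δ > (0 : ℝ), ∀ C : Set (ℝ × ℝ),
      IsFigure C → volume C < ENNReal.ofReal δ → |F C| < ε) ∧
    (∀ S : Set (ℝ × ℝ), Bornology.IsBounded S → volume (frontier S) = 0 →
      IntegratesTo F S (∫ x in S, f x)) := by
  classical
  have hM0 : 0 ≤ M := le_trans (abs_nonneg _) (hbdd (0, 0))
  refine ⟨?_, ?_, ?_⟩
  · -- additivity
    intro n C h1 h2
    simp only [hF]
    exact figure_additive hmeas hbdd n C h1 h2
  · -- absolute continuity
    intro ε hε
    refine ⟨ε / (M + 1), by positivity, ?_⟩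
    intro C hC hvol
    rw [hF]
    have hCm := isFigure_measurable hC
    have hvol' : volume C < ⊤ := hvol.trans ENNReal.ofReal_lt_top
    have hb := norm_setIntegral_le_of_norm_le_const (μ := volume) hvol'
      (C := M) (fun x _ => (Real.norm_eq_abs (f x)) ▸ hbdd x)
    rw [Real.norm_eq_abs] at hb
    have ht : (volume C).toReal < ε / (M + 1) := ENNReal.toReal_lt_of_lt_ofReal hvol
    have hfield : (M + 1) * (ε / (M + 1)) = ε := by field_simp
    calc |∫ x in C, f x| ≤ M * (volume C).toReal := hb
      _ < ε := by nlinarith [ENNReal.toReal_nonneg (a := volume C)]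
  · -- integrates to ∫_S f
    intro S hSb hSfr ε hε
    set δ' := ε / (2 * (M + 1)) with hδ'
    have hδ'0 : 0 < δ' := by positivity
    -- find a thickening of the frontier of small measure
    have hfb : Bornology.IsBounded (frontier S) :=
      hSb.closure.subset frontier_subset_closure
    have hfin : ∃ R > 0, volume (Metric.cthickening R (frontier S)) ≠ ⊤ :=
      ⟨1, one_pos, (hfb.cthickening.measure_lt_top).ne⟩
    have htend := tendsto_measure_cthickening_of_isClosed hfin isClosed_frontier
    rw [hSfr] at htend
    have hev : ∀ᶠ r in nhds (0 : ℝ),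
        volume (Metric.cthickening r (frontier S)) < ENNReal.ofReal δ' :=
      htend.eventually_lt_const (ENNReal.ofReal_pos.mpr hδ'0)
    obtain ⟨w, hwthick, hw0⟩ :=
      ((hev.filter_mono nhdsWithin_le_nhds).and
        (eventually_mem_nhdsWithin (s := Set.Ioi (0:ℝ)))).exists
    rw [Set.mem_Ioi] at hw0
    -- enclosing box
    obtain ⟨K, hK⟩ := hSb.closure.subset_closedBall 0
    set K' := max K 0 with hK'def
    have hKK' : closure S ⊆ Metric.closedBall 0 K' :=
      hK.trans (Metric.closedBall_subset_closedBall (le_max_left _ _))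
    set o : ℝ := -K' with ho
    set L := Nat.floor (2 * K' / w) + 1 with hL
    set TA := (Finset.range L ×ˢ Finset.range L).filter
      (fun p => gcell w o p ⊆ interior S) with hTA
    set TB := (Finset.range L ×ˢ Finset.range L).filter
      (fun p => (gcell w o p ∩ closure S).Nonempty) with hTB
    set A := ⋃ p ∈ TA, gcell w o p with hA
    set B := ⋃ p ∈ TB, gcell w o p with hB
    have hAfig := grid_isFigure hw0 o TA
    have hBfig := grid_isFigure hw0 o TB
    have hAsub : A ⊆ interior S :=
      Set.iUnion₂_subset fun p hp => (Finset.mem_filter.mp hp).2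
    have hBsup : closure S ⊆ B := by
      intro x hx
      have hdist : dist x 0 ≤ K' := Metric.mem_closedBall.mp (hKK' hx)
      rw [Prod.dist_eq] at hdist
      have h1 : |x.1| ≤ K' := by
        have := le_trans (le_max_left _ _) hdist
        simpa [Real.dist_eq] using this
      have h2 : |x.2| ≤ K' := by
        have := le_trans (le_max_right _ _) hdist
        simpa [Real.dist_eq] using this
      obtain ⟨i, hi, hxi⟩ := coord_cover hw0 h1
      obtain ⟨j, hj, hxj⟩ := coord_cover hw0 h2
      have hxcell : x ∈ gcell w o (i, j) := ⟨hxi, hxj⟩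
      have hmem : (i, j) ∈ TB := by
        rw [hTB, Finset.mem_filter]
        exact ⟨Finset.mem_product.mpr ⟨Finset.mem_range.mpr hi, Finset.mem_range.mpr hj⟩,
          ⟨x, hxcell, hx⟩⟩
      exact Set.mem_biUnion hmem hxcell
    have hBA : B \ A ⊆ Metric.cthickening w (frontier S) := by
      rintro x ⟨hxB, hxA⟩
      obtain ⟨p, hp, hxp⟩ := Set.mem_iUnion₂.mp hxB
      have hpfilter := Finset.mem_filter.mp hp
      have hnotint : ¬ gcell w o p ⊆ interior S := by
        intro hcon
        exact hxA (Set.mem_biUnion (Finset.mem_filter.mpr ⟨hpfilter.1, hcon⟩) hxp)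
      obtain ⟨y, hy, hyfr⟩ := gcell_meets_frontier hpfilter.2 hnotint
      exact Metric.mem_cthickening_of_dist_le x y w _ hyfr
        (gcell_diam hw0.le hxp hy)
    have hvolBA : volume (B \ A) < ENNReal.ofReal δ' :=
      lt_of_le_of_lt (measure_mono hBA) hwthick
    -- integral over S equals integral over interior S
    have hIeq : ∫ x in S, f x = ∫ x in interior S, f x := by
      refine setIntegral_congr_set ?_
      rw [MeasureTheory.ae_eq_set]
      constructor
      · refine measure_mono_null (fun x hx => ?_) hSfr
        rw [frontier, Set.mem_diff]
        exact ⟨subset_closure hx.1, fun h => hx.2 (by rwa [interior] at h)⟩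
      · rw [Set.diff_eq_empty.mpr interior_subset, measure_empty]
    refine ⟨A, B, hAfig, hBfig, hAsub, hBsup, ?_⟩
    intro C hC hAC hCB
    rw [hF, hIeq]
    have hCm := isFigure_measurable hC
    have hCvol : volume C < ⊤ := (measure_mono hCB).trans_lt (isFigure_volume_lt_top hBfig)
    have hSint_vol : volume (interior S) < ⊤ :=
      (hSb.subset interior_subset).measure_lt_top
    have hintC : IntegrableOn f C := integrableOn_of_bdd hmeas hbdd hCvol
    have hintS : IntegrableOn f (interior S) := integrableOn_of_bdd hmeas hbdd hSint_vol
    have split1 := integral_inter_add_diff (μ := volume) (s := C) (t := interior S)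
      measurableSet_interior hintC (f := f)
    have split2 := integral_inter_add_diff (μ := volume) (s := interior S) (t := C)
      hCm hintS (f := f)
    have hkey : (∫ x in C, f x) - ∫ x in interior S, f x
        = (∫ x in C \ interior S, f x) - ∫ x in interior S \ C, f x := by
      rw [← split1, ← split2, Set.inter_comm]
      ring
    have hBAtop : volume (B \ A) < ⊤ :=
      (measure_mono Set.diff_subset).trans_lt (isFigure_volume_lt_top hBfig)
    have hsub1 : C \ interior S ⊆ B \ A := fun x hx =>
      ⟨hCB hx.1, fun hxA => hx.2 (hAsub hxA)⟩
    have hsub2 : interior S \ C ⊆ B \ A := fun x hx =>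
      ⟨hBsup (subset_closure (interior_subset hx.1)), fun hxA => hx.2 (hAC hxA)⟩
    set t := (volume (B \ A)).toReal with htdef
    have ht : t < δ' := ENNReal.toReal_lt_of_lt_ofReal hvolBA
    have ht0 : 0 ≤ t := ENNReal.toReal_nonneg
    have hb1 : |∫ x in C \ interior S, f x| ≤ M * t := by
      have hm := norm_setIntegral_le_of_norm_le_const (μ := volume)
        ((measure_mono hsub1).trans_lt hBAtop)
        (C := M) (fun x _ => (Real.norm_eq_abs (f x)) ▸ hbdd x)
      rw [Real.norm_eq_abs] at hm
      refine hm.trans (mul_le_mul_of_nonneg_left ?_ hM0)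
      exact ENNReal.toReal_mono hBAtop.ne (measure_mono hsub1)
    have hb2 : |∫ x in interior S \ C, f x| ≤ M * t := by
      have hm := norm_setIntegral_le_of_norm_le_const (μ := volume)
        ((measure_mono hsub2).trans_lt hBAtop)
        (C := M) (fun x _ => (Real.norm_eq_abs (f x)) ▸ hbdd x)
      rw [Real.norm_eq_abs] at hm
      refine hm.trans (mul_le_mul_of_nonneg_left ?_ hM0)
      exact ENNReal.toReal_mono hBAtop.ne (measure_mono hsub2)
    have hfield : (2 * (M + 1)) * δ' = ε := by
      rw [hδ']; field_simp
    calc |(∫ x in C, f x) - ∫ x in interior S, f x|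
        = |(∫ x in C \ interior S, f x) - ∫ x in interior S \ C, f x| := by rw [hkey]
      _ ≤ |∫ x in C \ interior S, f x| + |∫ x in interior S \ C, f x| := abs_sub _ _
      _ ≤ M * t + M * t := add_le_add hb1 hb2
      _ < ε := by nlinarith
end
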